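/- arXiv:1906.01305 — 10 statements merged into one kernel-verified Lean document; each statement's English description precedes it below -/
import Mathlib

section
/- Let p, q : ℝ → ℝ^N be smooth solutions of the Neumann system p_x = q, q_x = −Λp + (⟨Λp,p⟩ − ⟨q,q⟩)p such that ⟨p(x),p(x)⟩ = 1 and ⟨p(x),q(x)⟩ = 0 for all x, and set u(x) = ⟨q(x),q(x)⟩ − ⟨Λp(x),p(x)⟩. Then for every integer k ≥ 0 the functions f(x) = ⟨Λ^{−k−1}p(x),p(x)⟩ and g(x) = ⟨Λ^{−k}p(x),p(x)⟩ satisfy the identity f''' + 4u·f' + 2u'·f + 4g' = 0 on ℝ (this is (∂³ + 2(u∂ + ∂u))⟨Λ^{−k−1}p,p⟩ + 4∂⟨Λ^{−k}p,p⟩ = 0). -/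
open Finset

/-- Lemma 1 of the paper. For smooth solutions of the Neumann system
on the tangent bundle of the unit sphere, with `u = ⟨q,q⟩ - ⟨Λp,p⟩`, the functions
`f = ⟨Λ^{-k-1}p,p⟩`, `g = ⟨Λ^{-k}p,p⟩` satisfy
`f''' + 4 u f' + 2 u' f + 4 g' = 0`. -/
theorem backward_lenard_identity
    (N : ℕ) (hN : 2 ≤ N) (lam : Fin N → ℝ)
    (hdist : Function.Injective lam) (hnz : ∀ i, lam i ≠ 0)
    (p q : ℝ → Fin N → ℝ)
    (hp : ∀ i, ContDiff ℝ (⊤ : ℕ∞) (fun x => p x i))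
    (hq : ∀ i, ContDiff ℝ (⊤ : ℕ∞) (fun x => q x i))
    (hode1 : ∀ x i, deriv (fun y => p y i) x = q x i)
    (hode2 : ∀ x i, deriv (fun y => q y i) x
      = - lam i * p x i
        + ((∑ j, lam j * p x j * p x j) - (∑ j, q x j * q x j)) * p x i)
    (hsph : ∀ x, ∑ i, p x i * p x i = 1)
    (htan : ∀ x, ∑ i, p x i * q x i = 0)
    (u f g : ℝ → ℝ)
    (hu : ∀ x, u x = (∑ i, q x i * q x i) - ∑ i, lam i * p x i * p x i)
    (k : ℕ)
    (hf : ∀ x, f x = ∑ i, ((lam i)⁻¹) ^ (k + 1) * p x i * p x i)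
    (hg : ∀ x, g x = ∑ i, ((lam i)⁻¹) ^ k * p x i * p x i) :
    ∀ x, deriv (deriv (deriv f)) x + 4 * u x * deriv f x + 2 * deriv u x * f x
      + 4 * deriv g x = 0 := by
  have hab : ∀ i, ((lam i)⁻¹) ^ (k + 1) * lam i = ((lam i)⁻¹) ^ k := by
    intro i
    rw [pow_succ, mul_assoc, inv_mul_cancel₀ (hnz i), mul_one]
  have hp' : ∀ x i, HasDerivAt (fun y => p y i) (q x i) x := by
    intro x i
    have h := (((hp i).differentiable (by simp)) x).hasDerivAt
    rwa [hode1 x i] at h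
  have hq' : ∀ x i, HasDerivAt (fun y => q y i) (-lam i * p x i - u x * p x i) x := by
    intro x i
    have h := (((hq i).differentiable (by simp)) x).hasDerivAt
    rw [hode2 x i] at h
    have e : - lam i * p x i
        + ((∑ j, lam j * p x j * p x j) - (∑ j, q x j * q x j)) * p x i
        = -lam i * p x i - u x * p x i := by rw [hu x]; ring
    rwa [e] at h
  have hfE : f = fun x => ∑ i, ((lam i)⁻¹) ^ (k + 1) * p x i * p x i := funext hf
  have hgE : g = fun x => ∑ i, ((lam i)⁻¹) ^ k * p x i * p x i := funext hg
  have huE : u = fun x => (∑ i, q x i * q x i) - ∑ i, lam i * p x i * p x i := funext hu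
  have Hf : ∀ x, HasDerivAt f
      (∑ i, (((lam i)⁻¹) ^ (k + 1) * q x i * p x i + ((lam i)⁻¹) ^ (k + 1) * p x i * q x i)) x := by
    intro x; rw [hfE]
    exact HasDerivAt.fun_sum fun i _ => ((hp' x i).const_mul _).mul (hp' x i)
  have Hg : ∀ x, HasDerivAt g
      (∑ i, (((lam i)⁻¹) ^ k * q x i * p x i + ((lam i)⁻¹) ^ k * p x i * q x i)) x := by
    intro x; rw [hgE]
    exact HasDerivAt.fun_sum fun i _ => ((hp' x i).const_mul _).mul (hp' x i)
  have Hu : ∀ x, HasDerivAt u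
      ((∑ i, ((-lam i * p x i - u x * p x i) * q x i + q x i * (-lam i * p x i - u x * p x i)))
        - ∑ i, (lam i * q x i * p x i + lam i * p x i * q x i)) x := by
    intro x
    have h : HasDerivAt (fun x => (∑ i, q x i * q x i) - ∑ i, lam i * p x i * p x i)
        ((∑ i, ((-lam i * p x i - u x * p x i) * q x i + q x i * (-lam i * p x i - u x * p x i)))
          - ∑ i, (lam i * q x i * p x i + lam i * p x i * q x i)) x :=
      (HasDerivAt.fun_sum fun i (_ : i ∈ Finset.univ) => (hq' x i).mul (hq' x i)).sub
        (HasDerivAt.fun_sum fun i (_ : i ∈ Finset.univ) => ((hp' x i).const_mul (lam i)).mul (hp' x i))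
    rwa [← huE] at h
  have hdf : deriv f = fun x =>
      ∑ i, (((lam i)⁻¹) ^ (k + 1) * q x i * p x i + ((lam i)⁻¹) ^ (k + 1) * p x i * q x i) :=
    funext fun x => (Hf x).deriv
  -- second derivative of f, in closed form
  have Hf2 : ∀ x, HasDerivAt
      (fun x => ∑ i, (((lam i)⁻¹) ^ (k + 1) * q x i * p x i
        + ((lam i)⁻¹) ^ (k + 1) * p x i * q x i))
      (2 * (∑ i, ((lam i)⁻¹) ^ (k + 1) * q x i * q x i) - 2 * g x - 2 * (u x * f x)) x := by
    intro x
    have h := HasDerivAt.fun_sum (fun i (_ : i ∈ Finset.univ) =>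
      ((((hq' x i).const_mul (((lam i)⁻¹) ^ (k + 1))).mul (hp' x i)).add
        (((hp' x i).const_mul (((lam i)⁻¹) ^ (k + 1))).mul (hq' x i))))
    have e : (∑ i, ((((lam i)⁻¹) ^ (k + 1) * (-lam i * p x i - u x * p x i) * p x i
          + ((lam i)⁻¹) ^ (k + 1) * q x i * q x i)
        + (((lam i)⁻¹) ^ (k + 1) * q x i * q x i
          + ((lam i)⁻¹) ^ (k + 1) * p x i * (-lam i * p x i - u x * p x i))))
        = 2 * (∑ i, ((lam i)⁻¹) ^ (k + 1) * q x i * q x i) - 2 * g x - 2 * (u x * f x) := by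
      rw [hf x, hg x]
      calc (∑ i, ((((lam i)⁻¹) ^ (k + 1) * (-lam i * p x i - u x * p x i) * p x i
              + ((lam i)⁻¹) ^ (k + 1) * q x i * q x i)
            + (((lam i)⁻¹) ^ (k + 1) * q x i * q x i
              + ((lam i)⁻¹) ^ (k + 1) * p x i * (-lam i * p x i - u x * p x i))))
          = ∑ i, (2 * (((lam i)⁻¹) ^ (k + 1) * q x i * q x i)
              - 2 * (((lam i)⁻¹) ^ k * p x i * p x i)
              - 2 * (u x * (((lam i)⁻¹) ^ (k + 1) * p x i * p x i))) :=
            Finset.sum_congr rfl fun i _ => by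
              linear_combination (-2 * p x i * p x i) * hab i
        _ = _ := by
            rw [Finset.sum_sub_distrib, Finset.sum_sub_distrib, ← Finset.mul_sum,
              ← Finset.mul_sum, ← Finset.mul_sum, ← Finset.mul_sum]
    exact e ▸ h
  have hdf2 : deriv (fun x => ∑ i, (((lam i)⁻¹) ^ (k + 1) * q x i * p x i
        + ((lam i)⁻¹) ^ (k + 1) * p x i * q x i))
      = fun x => 2 * (∑ i, ((lam i)⁻¹) ^ (k + 1) * q x i * q x i) - 2 * g x - 2 * (u x * f x) :=
    funext fun x => (Hf2 x).deriv
  -- third derivative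
  have Hf3 : ∀ x, HasDerivAt
      (fun x => 2 * (∑ i, ((lam i)⁻¹) ^ (k + 1) * q x i * q x i) - 2 * g x - 2 * (u x * f x))
      (2 * (∑ i, (((lam i)⁻¹) ^ (k + 1) * (-lam i * p x i - u x * p x i) * q x i
          + ((lam i)⁻¹) ^ (k + 1) * q x i * (-lam i * p x i - u x * p x i)))
        - 2 * (∑ i, (((lam i)⁻¹) ^ k * q x i * p x i + ((lam i)⁻¹) ^ k * p x i * q x i))
        - 2 * (((∑ i, ((-lam i * p x i - u x * p x i) * q x i
              + q x i * (-lam i * p x i - u x * p x i)))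
            - ∑ i, (lam i * q x i * p x i + lam i * p x i * q x i)) * f x
          + u x * ∑ i, (((lam i)⁻¹) ^ (k + 1) * q x i * p x i
            + ((lam i)⁻¹) ^ (k + 1) * p x i * q x i))) x := by
    intro x
    exact (((HasDerivAt.fun_sum fun i (_ : i ∈ Finset.univ) =>
        ((hq' x i).const_mul (((lam i)⁻¹) ^ (k + 1))).mul (hq' x i)).const_mul 2).sub
      ((Hg x).const_mul 2)).sub (((Hu x).mul (Hf x)).const_mul 2)
  have key : ∀ x,
      (∑ i, (((lam i)⁻¹) ^ (k + 1) * (-lam i * p x i - u x * p x i) * q x i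
          + ((lam i)⁻¹) ^ (k + 1) * q x i * (-lam i * p x i - u x * p x i)))
        + (∑ i, (((lam i)⁻¹) ^ k * q x i * p x i + ((lam i)⁻¹) ^ k * p x i * q x i))
        + u x * (∑ i, (((lam i)⁻¹) ^ (k + 1) * q x i * p x i
          + ((lam i)⁻¹) ^ (k + 1) * p x i * q x i)) = 0 := by
    intro x
    rw [Finset.mul_sum, ← Finset.sum_add_distrib, ← Finset.sum_add_distrib]
    refine Finset.sum_eq_zero fun i _ => ?_
    linear_combination (-2 * p x i * q x i) * hab i
  intro x
  rw [hdf, hdf2, (Hf3 x).deriv, (Hu x).deriv, (Hg x).deriv]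
  linear_combination 2 * key x
end

section
/- Let p, q : ℝ → ℝ^N be smooth solutions of the Neumann system p_x = q, q_x = −Λp + (⟨Λp,p⟩ − ⟨q,q⟩)p with ⟨p(x),p(x)⟩ = 1 and ⟨p(x),q(x)⟩ = 0 for all x, set u = ⟨q,q⟩ − ⟨Λp,p⟩, and assume ⟨Λ^{−1}p(x),p(x)⟩ > 0 for all x. Then ρ(x) = √⟨Λ^{−1}p(x),p(x)⟩ satisfies ρ'' + uρ = −ρ^{−3}·(⟨Λ^{−1}p,p⟩ − ⟨Λ^{−1}p,p⟩⟨Λ^{−1}q,q⟩ + ⟨Λ^{−1}p,q⟩²). In particular, if ⟨Λ^{−1}p,p⟩ − ⟨Λ^{−1}p,p⟩⟨Λ^{−1}q,q⟩ + ⟨Λ^{−1}p,q⟩² vanishes identically, then ρ lies in the kernel of the Schrödinger operator, i.e. ρ'' + uρ = 0. -/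
open Finset

/-- For smooth solutions of the Neumann system with
`⟨Λ⁻¹p,p⟩ > 0`, the function `ρ = √⟨Λ⁻¹p,p⟩` satisfies
`ρ'' + uρ = -ρ⁻³ (⟨Λ⁻¹p,p⟩ - ⟨Λ⁻¹p,p⟩⟨Λ⁻¹q,q⟩ + ⟨Λ⁻¹p,q⟩²)`; in particular when
the right-hand bracket vanishes identically, `ρ'' + uρ = 0`. -/
theorem rho_schrodinger_kernel
    (N : ℕ) (hN : 2 ≤ N) (lam : Fin N → ℝ)
    (hdist : Function.Injective lam) (hnz : ∀ i, lam i ≠ 0)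
    (p q : ℝ → Fin N → ℝ)
    (hp : ∀ i, ContDiff ℝ (⊤ : ℕ∞) (fun x => p x i))
    (hq : ∀ i, ContDiff ℝ (⊤ : ℕ∞) (fun x => q x i))
    (hode1 : ∀ x i, deriv (fun y => p y i) x = q x i)
    (hode2 : ∀ x i, deriv (fun y => q y i) x
      = - lam i * p x i
        + ((∑ j, lam j * p x j * p x j) - (∑ j, q x j * q x j)) * p x i)
    (hsph : ∀ x, ∑ i, p x i * p x i = 1)
    (htan : ∀ x, ∑ i, p x i * q x i = 0)
    (u : ℝ → ℝ)
    (hu : ∀ x, u x = (∑ i, q x i * q x i) - ∑ i, lam i * p x i * p x i)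
    (hpos : ∀ x, 0 < ∑ i, (lam i)⁻¹ * p x i * p x i)
    (ρ A : ℝ → ℝ)
    (hρ : ∀ x, ρ x = Real.sqrt (∑ i, (lam i)⁻¹ * p x i * p x i))
    (hA : ∀ x, A x = (∑ i, (lam i)⁻¹ * p x i * p x i)
      - (∑ i, (lam i)⁻¹ * p x i * p x i) * (∑ i, (lam i)⁻¹ * q x i * q x i)
      + (∑ i, (lam i)⁻¹ * p x i * q x i) ^ 2) :
    (∀ x, deriv (deriv ρ) x + u x * ρ x = -((ρ x) ^ 3)⁻¹ * A x) ∧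
    ((∀ x, A x = 0) → ∀ x, deriv (deriv ρ) x + u x * ρ x = 0) := by
  have hp' : ∀ x i, HasDerivAt (fun y => p y i) (q x i) x := by
    intro x i
    have h := (((hp i).differentiable (by simp)) x).hasDerivAt
    rwa [hode1 x i] at h
  have hq' : ∀ x i, HasDerivAt (fun y => q y i)
      (- lam i * p x i
        + ((∑ j, lam j * p x j * p x j) - (∑ j, q x j * q x j)) * p x i) x := by
    intro x i
    have h := (((hq i).differentiable (by simp)) x).hasDerivAt
    rwa [hode2 x i] at h
  have hF' : ∀ x, HasDerivAt (fun y => ∑ i, (lam i)⁻¹ * p y i * p y i)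
      (2 * ∑ i, (lam i)⁻¹ * p x i * q x i) x := by
    intro x
    have h := HasDerivAt.fun_sum (fun i (_ : i ∈ Finset.univ) =>
      (((hp' x i).const_mul ((lam i)⁻¹)).fun_mul (hp' x i)))
    refine h.congr_deriv (Eq.symm ?_)
    rw [Finset.mul_sum]
    exact Finset.sum_congr rfl fun i _ => by ring
  have hG' : ∀ x, HasDerivAt (fun y => ∑ i, (lam i)⁻¹ * p y i * q y i)
      ((∑ i, (lam i)⁻¹ * q x i * q x i) - 1
        - u x * (∑ i, (lam i)⁻¹ * p x i * p x i)) x := by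
    intro x
    have h := HasDerivAt.fun_sum (fun i (_ : i ∈ Finset.univ) =>
      (((hp' x i).const_mul ((lam i)⁻¹)).fun_mul (hq' x i)))
    refine h.congr_deriv (Eq.symm ?_)
    have e1 : ∀ i : Fin N,
        (lam i)⁻¹ * q x i * q x i + (lam i)⁻¹ * p x i *
          (- lam i * p x i
            + ((∑ j, lam j * p x j * p x j) - (∑ j, q x j * q x j)) * p x i)
        = (lam i)⁻¹ * q x i * q x i - p x i * p x i
            - u x * ((lam i)⁻¹ * p x i * p x i) := by
      intro i
      rw [hu x]
      have h1 : lam i * (lam i)⁻¹ = 1 := mul_inv_cancel₀ (hnz i)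
      linear_combination (-(p x i * p x i)) * h1
    calc (∑ i, (lam i)⁻¹ * q x i * q x i) - 1
        - u x * (∑ i, (lam i)⁻¹ * p x i * p x i)
        = (∑ i, (lam i)⁻¹ * q x i * q x i) - (∑ i, p x i * p x i)
            - ∑ i, u x * ((lam i)⁻¹ * p x i * p x i) := by
          rw [hsph x, Finset.mul_sum]
      _ = ∑ i, ((lam i)⁻¹ * q x i * q x i - p x i * p x i
            - u x * ((lam i)⁻¹ * p x i * p x i)) := by
          rw [Finset.sum_sub_distrib, Finset.sum_sub_distrib]
      _ = _ := Finset.sum_congr rfl fun i _ => (e1 i).symm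
  have hρeq : ρ = fun x => Real.sqrt (∑ i, (lam i)⁻¹ * p x i * p x i) := funext hρ
  have hsqrt' : ∀ x, HasDerivAt (fun y => Real.sqrt (∑ i, (lam i)⁻¹ * p y i * p y i))
      ((2 * ∑ i, (lam i)⁻¹ * p x i * q x i)
        / (2 * Real.sqrt (∑ i, (lam i)⁻¹ * p x i * p x i))) x :=
    fun x => (hF' x).sqrt (ne_of_gt (hpos x))
  have hρ' : ∀ x, HasDerivAt ρ
      ((∑ i, (lam i)⁻¹ * p x i * q x i)
        / Real.sqrt (∑ i, (lam i)⁻¹ * p x i * p x i)) x := by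
    intro x
    have h := hsqrt' x
    rw [← hρeq, mul_div_mul_left _ _ (two_ne_zero)] at h
    exact h
  have hderivρ : deriv ρ = fun x =>
      (∑ i, (lam i)⁻¹ * p x i * q x i)
        / Real.sqrt (∑ i, (lam i)⁻¹ * p x i * p x i) :=
    funext fun x => (hρ' x).deriv
  have main : ∀ x, deriv (deriv ρ) x + u x * ρ x = -((ρ x) ^ 3)⁻¹ * A x := by
    intro x
    have hs0 : Real.sqrt (∑ i, (lam i)⁻¹ * p x i * p x i) ≠ 0 :=
      ne_of_gt (Real.sqrt_pos.mpr (hpos x))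
    have hd := (hG' x).fun_div (hsqrt' x) hs0
    rw [← hderivρ] at hd
    rw [hd.deriv, hρ x, hA x]
    set s := Real.sqrt (∑ i, (lam i)⁻¹ * p x i * p x i) with hs
    have hs2 : s ^ 2 = ∑ i, (lam i)⁻¹ * p x i * p x i :=
      Real.sq_sqrt (le_of_lt (hpos x))
    rw [← hs2]
    rw [mul_div_mul_left _ _ (two_ne_zero : (2:ℝ) ≠ 0)]
    field_simp
    ring
  refine ⟨main, fun h0 x => by simpa [h0 x] using main x⟩
end

section
/- Let p, q : ℝ → ℝ^N be smooth solutions of the Neumann system p_x = q, q_x = −Λp + (⟨Λp,p⟩ − ⟨q,q⟩)p with ⟨p(x),p(x)⟩ = 1 and ⟨p(x),q(x)⟩ = 0 for all x. Then for each j with 1 ≤ j ≤ N, the function x ↦ E_j(p(x),q(x)) is constant, where E_j(p,q) = p_j² + Σ_{k=1,k≠j}^{N} (p_j q_k − p_k q_j)²/(λ_j − λ_k). -/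
open Finset

/-- Along solutions of the Neumann system on `TS^{N-1}`, each
quantity `E_j(p,q) = p_j² + Σ_{k≠j} (p_j q_k - p_k q_j)²/(λ_j - λ_k)` is a
constant of motion. -/
theorem E_j_constant_of_motion
    (N : ℕ) (hN : 2 ≤ N) (lam : Fin N → ℝ)
    (hdist : Function.Injective lam) (hnz : ∀ i, lam i ≠ 0)
    (p q : ℝ → Fin N → ℝ)
    (hp : ∀ i, ContDiff ℝ (⊤ : ℕ∞) (fun x => p x i))
    (hq : ∀ i, ContDiff ℝ (⊤ : ℕ∞) (fun x => q x i))
    (hode1 : ∀ x i, deriv (fun y => p y i) x = q x i)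
    (hode2 : ∀ x i, deriv (fun y => q y i) x
      = - lam i * p x i
        + ((∑ j, lam j * p x j * p x j) - (∑ j, q x j * q x j)) * p x i)
    (hsph : ∀ x, ∑ i, p x i * p x i = 1)
    (htan : ∀ x, ∑ i, p x i * q x i = 0) :
    ∀ j : Fin N, ∃ c : ℝ, ∀ x : ℝ,
      (p x j) ^ 2 + ∑ k ∈ Finset.univ.erase j,
        (p x j * q x k - p x k * q x j) ^ 2 / (lam j - lam k) = c := by
  intro j
  have hp' : ∀ i x, HasDerivAt (fun y => p y i) (q x i) x := by
    intro i x
    have h := ((hp i).differentiable (by simp)).differentiableAt (x := x)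
    simpa [hode1 x i] using h.hasDerivAt
  have hq' : ∀ i x, HasDerivAt (fun y => q y i)
      (- lam i * p x i
        + ((∑ j, lam j * p x j * p x j) - (∑ j, q x j * q x j)) * p x i) x := by
    intro i x
    have h := ((hq i).differentiable (by simp)).differentiableAt (x := x)
    simpa [hode2 x i] using h.hasDerivAt
  set E : ℝ → ℝ := fun x => (p x j) ^ 2 + ∑ k ∈ Finset.univ.erase j,
        (p x j * q x k - p x k * q x j) ^ 2 / (lam j - lam k) with hE
  have key : ∀ x, HasDerivAt E 0 x := by
    intro x
    have h1 : HasDerivAt (fun y => (p y j) ^ 2) (2 * p x j * q x j) x := by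
      have := (hp' j x).pow 2
      refine this.congr_deriv ?_
      ring
    have h2 : ∀ k ∈ Finset.univ.erase j,
        HasDerivAt (fun y => (p y j * q y k - p y k * q y j) ^ 2 / (lam j - lam k))
          (2 * (p x j * p x k) * (p x j * q x k - p x k * q x j)) x := by
      intro k hk
      have hkj : k ≠ j := Finset.ne_of_mem_erase hk
      have hlam : lam j - lam k ≠ 0 := sub_ne_zero.mpr (fun h => hkj (hdist h.symm))
      have hW : HasDerivAt (fun y => p y j * q y k - p y k * q y j)
          ((lam j - lam k) * (p x j * p x k)) x := by
        have h := ((hp' j x).mul (hq' k x)).add ((hq' j x).mul (hp' k x)).neg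
        have h' : HasDerivAt (fun y => p y j * q y k - p y k * q y j)
            (q x j * q x k + p x j * (- lam k * p x k
              + ((∑ j, lam j * p x j * p x j) - (∑ j, q x j * q x j)) * p x k)
             + -((- lam j * p x j
              + ((∑ j, lam j * p x j * p x j) - (∑ j, q x j * q x j)) * p x j) * p x k
              + q x j * q x k)) x := by
          exact h.congr_of_eventuallyEq (Filter.Eventually.of_forall fun y => by simp only [Pi.add_apply, Pi.mul_apply, Pi.neg_apply]; ring)
        convert h' using 1
        ring
      have h := (hW.pow 2).div_const (lam j - lam k)
      refine h.congr_deriv ?_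
      field_simp
      ring
    have hsum := HasDerivAt.sum h2
    have htot := h1.add hsum
    have e1 : ∑ k ∈ Finset.univ.erase j, p x k * q x k = - (p x j * q x j) := by
      have h := htan x
      rw [← Finset.add_sum_erase _ _ (Finset.mem_univ j)] at h
      linarith
    have e2 : ∑ k ∈ Finset.univ.erase j, p x k * p x k = 1 - p x j * p x j := by
      have h := hsph x
      rw [← Finset.add_sum_erase _ _ (Finset.mem_univ j)] at h
      linarith
    have esum : ∑ k ∈ Finset.univ.erase j,
        2 * (p x j * p x k) * (p x j * q x k - p x k * q x j)
        = 2 * (p x j * p x j) * (∑ k ∈ Finset.univ.erase j, p x k * q x k)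
          - 2 * (p x j * q x j) * (∑ k ∈ Finset.univ.erase j, p x k * p x k) := by
      rw [Finset.mul_sum, Finset.mul_sum, ← Finset.sum_sub_distrib]
      exact Finset.sum_congr rfl fun k _ => by ring
    convert htot using 1
    rfl
    rfl
    · ext y
      simp [hE, Finset.sum_apply]
    rw [esum, e1, e2]
    ring
  refine ⟨E 0, fun x => ?_⟩
  exact is_const_of_deriv_eq_zero (fun x => (key x).differentiableAt)
    (fun x => (key x).deriv) x 0
end

section
/- For all p, q ∈ ℝ^N one has Σ_{j=1}^{N} E_j(p,q) = ⟨p,p⟩, and for every integer k ≥ 1 one has Σ_{j=1}^{N} λ_j^{k} E_j(p,q) = ⟨Λ^k p,p⟩ + Σ_{j=0}^{k−1} (⟨Λ^j p,p⟩⟨Λ^{k−1−j}q,q⟩ − ⟨Λ^j p,q⟩⟨Λ^{k−1−j}p,q⟩), where E_j(p,q) = p_j² + Σ_{k'=1,k'≠j}^{N} (p_j q_{k'} − p_{k'} q_j)²/(λ_j − λ_{k'}). In particular, if ⟨p,p⟩ = 1 and ⟨p,q⟩ = 0, the right-hand side for k = 1 equals ⟨Λp,p⟩ + ⟨q,q⟩.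 -/
open Finset

lemma swap_sum {N : ℕ} (g : Fin N → Fin N → ℝ) :
    ∑ j, ∑ k ∈ univ.erase j, g j k = ∑ j, ∑ k ∈ univ.erase j, g k j := by
  rw [Finset.sum_comm' (s' := fun k => univ.erase k) (t' := univ)]
  intro x y
  simp [ne_comm, eq_comm]

lemma antisym_sum {N : ℕ} (g : Fin N → Fin N → ℝ)
    (h : ∀ j k, g j k = - g k j) :
    ∑ j, ∑ k ∈ univ.erase j, g j k = 0 := by
  have h1 := swap_sum g
  have h2 : ∑ j, ∑ k ∈ univ.erase j, g k j
      = - ∑ j, ∑ k ∈ univ.erase j, g j k := by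
    rw [← Finset.sum_neg_distrib]
    refine Finset.sum_congr rfl fun j _ => ?_
    rw [← Finset.sum_neg_distrib]
    exact Finset.sum_congr rfl fun k _ => h k j
  linarith [h1, h2]

lemma cross_sum {N : ℕ} (lam : Fin N → ℝ) (hdist : Function.Injective lam)
    (p q : Fin N → ℝ) (k : ℕ) (hk : 1 ≤ k) :
    ∑ j, ∑ k' ∈ univ.erase j, (lam j) ^ k * ((p j * q k' - p k' * q j) ^ 2 / (lam j - lam k'))
    = ∑ i ∈ Finset.range k,
        ((∑ j, (lam j) ^ i * p j * p j) * (∑ j, (lam j) ^ (k - 1 - i) * q j * q j)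
         - (∑ j, (lam j) ^ i * p j * q j) * (∑ j, (lam j) ^ (k - 1 - i) * p j * q j)) := by
  set T := ∑ j, ∑ k' ∈ univ.erase j, (lam j) ^ k *
      ((p j * q k' - p k' * q j) ^ 2 / (lam j - lam k')) with hT
  have key : T + T = ∑ j, ∑ k' : Fin N,
      ∑ i ∈ Finset.range k, (lam j) ^ i * (lam k') ^ (k - 1 - i) * (p j * q k' - p k' * q j) ^ 2 := by
    have h1 := swap_sum (fun j k' => (lam j) ^ k *
        ((p j * q k' - p k' * q j) ^ 2 / (lam j - lam k')))
    calc T + T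
        = ∑ j, ∑ k' ∈ univ.erase j,
            ((lam j) ^ k * ((p j * q k' - p k' * q j) ^ 2 / (lam j - lam k'))
             + (lam k') ^ k * ((p k' * q j - p j * q k') ^ 2 / (lam k' - lam j))) := by
          rw [hT]
          nth_rewrite 2 [h1]
          rw [← Finset.sum_add_distrib]
          refine Finset.sum_congr rfl fun j _ => ?_
          rw [← Finset.sum_add_distrib]
      _ = ∑ j, ∑ k' ∈ univ.erase j,
            ∑ i ∈ Finset.range k, (lam j) ^ i * (lam k') ^ (k - 1 - i)
              * (p j * q k' - p k' * q j) ^ 2 := by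
          refine Finset.sum_congr rfl fun j _ => Finset.sum_congr rfl fun k' hk' => ?_
          have hne : lam j ≠ lam k' := fun h => (Finset.mem_erase.mp hk').1 (hdist h).symm
          have hd : lam j - lam k' ≠ 0 := sub_ne_zero.mpr hne
          have hd2 : lam k' - lam j ≠ 0 := sub_ne_zero.mpr (Ne.symm hne)
          have hsq : (p k' * q j - p j * q k') ^ 2 = (p j * q k' - p k' * q j) ^ 2 := by ring
          set a := (p j * q k' - p k' * q j) ^ 2 with ha
          have step : lam j ^ k * (a / (lam j - lam k')) + lam k' ^ k * (a / (lam k' - lam j))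
              = (lam j ^ k - lam k' ^ k) / (lam j - lam k') * a := by
            field_simp
            ring
          rw [hsq, step, ← geom_sum₂_mul (lam j) (lam k') k,
            mul_div_cancel_right₀ _ hd, Finset.sum_mul]
      _ = ∑ j, ∑ k' : Fin N,
            ∑ i ∈ Finset.range k, (lam j) ^ i * (lam k') ^ (k - 1 - i)
              * (p j * q k' - p k' * q j) ^ 2 := by
          refine Finset.sum_congr rfl fun j _ => ?_
          rw [Finset.sum_erase]
          simp
  have expand : ∀ m n : ℕ, ∑ j, ∑ k' : Fin N,
      (lam j) ^ m * (lam k') ^ n * (p j * q k' - p k' * q j) ^ 2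
      = (∑ j, (lam j) ^ m * p j * p j) * (∑ j, (lam j) ^ n * q j * q j)
        - 2 * ((∑ j, (lam j) ^ m * p j * q j) * (∑ j, (lam j) ^ n * p j * q j))
        + (∑ j, (lam j) ^ m * q j * q j) * (∑ j, (lam j) ^ n * p j * p j) := by
    intro m n
    rw [Finset.sum_mul_sum, Finset.sum_mul_sum, Finset.sum_mul_sum]
    simp only [Finset.mul_sum]
    rw [← Finset.sum_sub_distrib, ← Finset.sum_add_distrib]
    refine Finset.sum_congr rfl fun j _ => ?_
    rw [← Finset.sum_sub_distrib, ← Finset.sum_add_distrib]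
    refine Finset.sum_congr rfl fun k' _ => ?_
    ring
  have keysum : ∑ j, ∑ k' : Fin N,
      ∑ i ∈ Finset.range k, (lam j) ^ i * (lam k') ^ (k - 1 - i) * (p j * q k' - p k' * q j) ^ 2
      = ∑ i ∈ Finset.range k, ((∑ j, (lam j) ^ i * p j * p j)
          * (∑ j, (lam j) ^ (k - 1 - i) * q j * q j)
        - 2 * ((∑ j, (lam j) ^ i * p j * q j) * (∑ j, (lam j) ^ (k - 1 - i) * p j * q j))
        + (∑ j, (lam j) ^ i * q j * q j) * (∑ j, (lam j) ^ (k - 1 - i) * p j * p j)) := by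
    calc ∑ j, ∑ k' : Fin N, ∑ i ∈ Finset.range k,
          (lam j) ^ i * (lam k') ^ (k - 1 - i) * (p j * q k' - p k' * q j) ^ 2
        = ∑ j, ∑ i ∈ Finset.range k, ∑ k' : Fin N,
          (lam j) ^ i * (lam k') ^ (k - 1 - i) * (p j * q k' - p k' * q j) ^ 2 :=
          Finset.sum_congr rfl fun j _ => Finset.sum_comm
      _ = ∑ i ∈ Finset.range k, ∑ j, ∑ k' : Fin N,
          (lam j) ^ i * (lam k') ^ (k - 1 - i) * (p j * q k' - p k' * q j) ^ 2 :=
          Finset.sum_comm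
      _ = _ := Finset.sum_congr rfl fun i _ => expand i (k - 1 - i)
  have refl1 : ∑ i ∈ Finset.range k, (∑ j, (lam j) ^ i * q j * q j)
          * (∑ j, (lam j) ^ (k - 1 - i) * p j * p j)
      = ∑ i ∈ Finset.range k, (∑ j, (lam j) ^ i * p j * p j)
          * (∑ j, (lam j) ^ (k - 1 - i) * q j * q j) := by
    rw [← Finset.sum_range_reflect]
    refine Finset.sum_congr rfl fun i hi => ?_
    have hi' : i < k := Finset.mem_range.mp hi
    have h2 : k - 1 - (k - 1 - i) = i := by omega
    rw [h2, mul_comm]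
  have h3 : T + T = (∑ i ∈ Finset.range k, (∑ j, (lam j) ^ i * p j * p j)
          * (∑ j, (lam j) ^ (k - 1 - i) * q j * q j))
      - 2 * (∑ i ∈ Finset.range k, (∑ j, (lam j) ^ i * p j * q j)
          * (∑ j, (lam j) ^ (k - 1 - i) * p j * q j))
      + ∑ i ∈ Finset.range k, (∑ j, (lam j) ^ i * p j * p j)
          * (∑ j, (lam j) ^ (k - 1 - i) * q j * q j) := by
    rw [key, keysum, Finset.sum_add_distrib, Finset.sum_sub_distrib, refl1, ← Finset.mul_sum]
  rw [Finset.sum_sub_distrib]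
  linarith [h3]

/-- Sums of the quantities `E_j` weighted by nonnegative powers of the
eigenvalues reproduce the forward integrals of motion `F_k`:
`Σ_j E_j = ⟨p,p⟩`, and for `k ≥ 1`,
`Σ_j λ_j^k E_j = ⟨Λ^k p,p⟩ + Σ_{i=0}^{k-1} (⟨Λ^i p,p⟩⟨Λ^{k-1-i}q,q⟩ - ⟨Λ^i p,q⟩⟨Λ^{k-1-i}p,q⟩)`.
In particular, on `TS^{N-1}` the right-hand side for `k = 1` is `⟨Λp,p⟩ + ⟨q,q⟩`. -/
theorem forward_integrals_from_E
    (N : ℕ) (hN : 2 ≤ N) (lam : Fin N → ℝ)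
    (hdist : Function.Injective lam) (hnz : ∀ i, lam i ≠ 0)
    (p q : Fin N → ℝ) :
    (∑ j, ((p j) ^ 2 + ∑ k ∈ Finset.univ.erase j,
        (p j * q k - p k * q j) ^ 2 / (lam j - lam k)) = ∑ j, p j * p j) ∧
    (∀ k : ℕ, 1 ≤ k →
      ∑ j, (lam j) ^ k * ((p j) ^ 2 + ∑ k' ∈ Finset.univ.erase j,
          (p j * q k' - p k' * q j) ^ 2 / (lam j - lam k'))
      = (∑ j, (lam j) ^ k * p j * p j)
        + ∑ i ∈ Finset.range k,
            ((∑ j, (lam j) ^ i * p j * p j) * (∑ j, (lam j) ^ (k - 1 - i) * q j * q j)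
             - (∑ j, (lam j) ^ i * p j * q j) * (∑ j, (lam j) ^ (k - 1 - i) * p j * q j))) ∧
    ((∑ j, p j * p j = 1) → (∑ j, p j * q j = 0) →
      (∑ j, lam j * p j * p j)
        + ∑ i ∈ Finset.range 1,
            ((∑ j, (lam j) ^ i * p j * p j) * (∑ j, (lam j) ^ (0 - i) * q j * q j)
             - (∑ j, (lam j) ^ i * p j * q j) * (∑ j, (lam j) ^ (0 - i) * p j * q j))
      = (∑ j, lam j * p j * p j) + ∑ j, q j * q j) := by
  refine ⟨?_, ?_, ?_⟩
  · rw [Finset.sum_add_distrib]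
    rw [antisym_sum (fun j k => (p j * q k - p k * q j) ^ 2 / (lam j - lam k))
      (fun j k => by rw [← div_neg]; ring_nf)]
    simp [pow_two]
  · intro k hk
    have h1 : ∀ j : Fin N, (lam j) ^ k * ((p j) ^ 2 + ∑ k' ∈ Finset.univ.erase j,
          (p j * q k' - p k' * q j) ^ 2 / (lam j - lam k'))
        = (lam j) ^ k * p j * p j + ∑ k' ∈ Finset.univ.erase j,
          (lam j) ^ k * ((p j * q k' - p k' * q j) ^ 2 / (lam j - lam k')) := by
      intro j
      have h2 : lam j ^ k * p j ^ 2 = lam j ^ k * p j * p j := by ring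
      rw [mul_add, Finset.mul_sum, h2]
    rw [Finset.sum_congr rfl fun j _ => h1 j, Finset.sum_add_distrib,
      cross_sum lam hdist p q k hk]
  · intro hp hpq
    simp [hp, hpq]
end

section
/- For all p, q ∈ ℝ^N and every integer k ≥ 0 one has Σ_{j=1}^{N} λ_j^{−k−1} E_j(p,q) = ⟨Λ^{−k−1}p,p⟩ − Σ_{j=0}^{k} (⟨Λ^{−j−1}p,p⟩⟨Λ^{−k+j−1}q,q⟩ − ⟨Λ^{−j−1}p,q⟩⟨Λ^{−k+j−1}p,q⟩), where E_j(p,q) = p_j² + Σ_{k'=1,k'≠j}^{N} (p_j q_{k'} − p_{k'} q_j)²/(λ_j − λ_{k'}). That is, the backward integrals of motion F_{−k} are linear combinations of the quantities E_j with coefficients λ_j^{−k−1}. -/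
open Finset

lemma aux_geom (m : ℕ) (a b : ℝ) (hab : a ≠ b) (ha : a ≠ 0) (hb : b ≠ 0) :
    (a⁻¹ ^ m - b⁻¹ ^ m) / (a - b)
      = -∑ i ∈ Finset.range m, a⁻¹ ^ (i + 1) * b⁻¹ ^ (m - i) := by
  have hsub : a - b ≠ 0 := sub_ne_zero.mpr hab
  have h1 : (∑ i ∈ Finset.range m, a⁻¹ ^ i * b⁻¹ ^ (m - 1 - i)) * (a⁻¹ - b⁻¹)
      = a⁻¹ ^ m - b⁻¹ ^ m := geom_sum₂_mul a⁻¹ b⁻¹ m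
  have h2 : ∑ i ∈ Finset.range m, a⁻¹ ^ (i + 1) * b⁻¹ ^ (m - i)
      = (∑ i ∈ Finset.range m, a⁻¹ ^ i * b⁻¹ ^ (m - 1 - i)) * (a⁻¹ * b⁻¹) := by
    rw [Finset.sum_mul]
    refine Finset.sum_congr rfl fun i hi => ?_
    have hi' : i < m := Finset.mem_range.mp hi
    have hmi : m - i = (m - 1 - i) + 1 := by omega
    rw [hmi, pow_succ, pow_succ]
    ring
  rw [h2, ← h1]
  field_simp
  ring

lemma sum_range_reflect' (n : ℕ) (F : ℕ → ℕ → ℝ) :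
    ∑ i ∈ Finset.range (n + 1), F i (n - i)
      = ∑ i ∈ Finset.range (n + 1), F (n - i) i := by
  rw [← Finset.sum_range_reflect]
  refine Finset.sum_congr rfl fun i hi => ?_
  have hi' : i < n + 1 := Finset.mem_range.mp hi
  have e1 : n + 1 - 1 - i = n - i := by omega
  have e2 : n - (n - i) = i := by omega
  rw [e1, e2]

lemma expand_prod_sum {α : Type*} (s : Finset α) (U V W X Y Z : α → ℝ) :
    ∑ j ∈ s, ∑ k' ∈ s, (U j * V k' + W j * X k' - 2 * (Y j * Z k'))
      = (∑ j ∈ s, U j) * (∑ j ∈ s, V j) + (∑ j ∈ s, W j) * (∑ j ∈ s, X j)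
        - 2 * ((∑ j ∈ s, Y j) * (∑ j ∈ s, Z j)) := by
  simp only [Finset.sum_add_distrib, Finset.sum_sub_distrib, ← Finset.mul_sum,
    ← Finset.sum_mul]

/-- The backward integrals of motion `F_{-k}` are linear combinations of
the quantities `E_j` with coefficients `λ_j^{-k-1}`:
`Σ_j λ_j^{-k-1} E_j = ⟨Λ^{-k-1}p,p⟩ - Σ_{i=0}^{k}
(⟨Λ^{-i-1}p,p⟩⟨Λ^{-k+i-1}q,q⟩ - ⟨Λ^{-i-1}p,q⟩⟨Λ^{-k+i-1}p,q⟩)`. -/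
theorem backward_integrals_from_E
    (N : ℕ) (hN : 2 ≤ N) (lam : Fin N → ℝ)
    (hdist : Function.Injective lam) (hnz : ∀ i, lam i ≠ 0)
    (p q : Fin N → ℝ) (k : ℕ) :
    ∑ j, ((lam j)⁻¹) ^ (k + 1) * ((p j) ^ 2 + ∑ k' ∈ Finset.univ.erase j,
        (p j * q k' - p k' * q j) ^ 2 / (lam j - lam k'))
    = (∑ j, ((lam j)⁻¹) ^ (k + 1) * p j * p j)
      - ∑ i ∈ Finset.range (k + 1),
          ((∑ j, ((lam j)⁻¹) ^ (i + 1) * p j * p j)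
              * (∑ j, ((lam j)⁻¹) ^ (k - i + 1) * q j * q j)
           - (∑ j, ((lam j)⁻¹) ^ (i + 1) * p j * q j)
              * (∑ j, ((lam j)⁻¹) ^ (k - i + 1) * p j * q j)) := by
  classical
  set D : Fin N → Fin N → ℝ := fun j k' => (p j * q k' - p k' * q j) ^ 2 with hD
  set f : Fin N → Fin N → ℝ :=
    fun j k' => (lam j)⁻¹ ^ (k + 1) * D j k' / (lam j - lam k') with hf
  have hdiagD : ∀ j, D j j = 0 := by intro j; simp [hD]
  have hfd : ∀ j, f j j = 0 := by intro j; simp [hf, hdiagD]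
  -- Step A : split the LHS
  have hE : ∀ j : Fin N, (∑ k' ∈ Finset.univ.erase j, f j k') = ∑ k', f j k' := by
    intro j
    rw [← Finset.add_sum_erase Finset.univ (f j) (Finset.mem_univ j), hfd j, zero_add]
  have hA : ∑ j, ((lam j)⁻¹) ^ (k + 1) * ((p j) ^ 2 + ∑ k' ∈ Finset.univ.erase j,
        D j k' / (lam j - lam k'))
      = (∑ j, ((lam j)⁻¹) ^ (k + 1) * p j * p j) + ∑ j, ∑ k', f j k' := by
    rw [← Finset.sum_add_distrib]
    refine Finset.sum_congr rfl fun j _ => ?_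
    rw [mul_add, Finset.mul_sum, ← hE j]
    congr 1
    · ring
    · refine Finset.sum_congr rfl fun k' _ => ?_
      simp only [hf]
      rw [mul_div_assoc]
  -- pair identity
  have hpair : ∀ j k', f j k' + f k' j
      = -(D j k' * ∑ i ∈ Finset.range (k + 1),
          (lam j)⁻¹ ^ (i + 1) * (lam k')⁻¹ ^ (k - i + 1)) := by
    intro j k'
    by_cases hjk : j = k'
    · subst hjk; rw [hfd, hdiagD]; simp
    · have hne : lam j ≠ lam k' := fun e => hjk (hdist e)
      have hsub : lam j - lam k' ≠ 0 := sub_ne_zero.mpr hne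
      have hsub' : lam k' - lam j ≠ 0 := sub_ne_zero.mpr (Ne.symm hne)
      have h1 := hnz j
      have h2 := hnz k'
      have hDsymm : D k' j = D j k' := by simp only [hD]; ring
      have hkey : f j k' + f k' j
          = D j k' * (((lam j)⁻¹ ^ (k + 1) - (lam k')⁻¹ ^ (k + 1)) / (lam j - lam k')) := by
        simp only [hf, hDsymm]
        field_simp
        ring
      rw [hkey, aux_geom (k + 1) (lam j) (lam k') hne h1 h2, mul_neg]
      congr 2
      refine Finset.sum_congr rfl fun i hi => ?_
      have hi' : i < k + 1 := Finset.mem_range.mp hi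
      have e1 : k + 1 - i = k - i + 1 := by omega
      rw [e1]
  -- expand the double sum of D-products
  have hT : ∀ i : ℕ, (∑ j, ∑ k', D j k' *
        ((lam j)⁻¹ ^ (i + 1) * (lam k')⁻¹ ^ (k - i + 1)))
      = (∑ j, ((lam j)⁻¹) ^ (i + 1) * p j * p j)
          * (∑ j, ((lam j)⁻¹) ^ (k - i + 1) * q j * q j)
        + (∑ j, ((lam j)⁻¹) ^ (i + 1) * q j * q j)
          * (∑ j, ((lam j)⁻¹) ^ (k - i + 1) * p j * p j)
        - 2 * ((∑ j, ((lam j)⁻¹) ^ (i + 1) * p j * q j)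
          * (∑ j, ((lam j)⁻¹) ^ (k - i + 1) * p j * q j)) := by
    intro i
    calc (∑ j, ∑ k', D j k' * ((lam j)⁻¹ ^ (i + 1) * (lam k')⁻¹ ^ (k - i + 1)))
        = ∑ j, ∑ k',
            (((lam j)⁻¹ ^ (i + 1) * p j * p j) * ((lam k')⁻¹ ^ (k - i + 1) * q k' * q k')
             + ((lam j)⁻¹ ^ (i + 1) * q j * q j) * ((lam k')⁻¹ ^ (k - i + 1) * p k' * p k')
             - 2 * (((lam j)⁻¹ ^ (i + 1) * p j * q j)
               * ((lam k')⁻¹ ^ (k - i + 1) * p k' * q k'))) := by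
          refine Finset.sum_congr rfl fun j _ => ?_
          refine Finset.sum_congr rfl fun k' _ => ?_
          simp only [hD]
          ring
      _ = _ := expand_prod_sum _ _ _ _ _ _ _
  -- reflection
  have hrefl : ∑ i ∈ Finset.range (k + 1),
        (∑ j, ((lam j)⁻¹) ^ (i + 1) * q j * q j)
          * (∑ j, ((lam j)⁻¹) ^ (k - i + 1) * p j * p j)
      = ∑ i ∈ Finset.range (k + 1),
        (∑ j, ((lam j)⁻¹) ^ (i + 1) * p j * p j)
          * (∑ j, ((lam j)⁻¹) ^ (k - i + 1) * q j * q j) := by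
    have := sum_range_reflect' k (fun a b =>
      (∑ j, ((lam j)⁻¹) ^ (a + 1) * q j * q j)
        * (∑ j, ((lam j)⁻¹) ^ (b + 1) * p j * p j))
    rw [this]
    exact Finset.sum_congr rfl fun i _ => mul_comm _ _
  -- compute 2 * S
  have hswap : (∑ j, ∑ k', f k' j) = ∑ j, ∑ k', f j k' := Finset.sum_comm
  have h2S : 2 * (∑ j, ∑ k', f j k')
      = -∑ i ∈ Finset.range (k + 1), ∑ j, ∑ k', D j k' *
          ((lam j)⁻¹ ^ (i + 1) * (lam k')⁻¹ ^ (k - i + 1)) := by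
    have step1 : (∑ j, ∑ k', (f j k' + f k' j)) = 2 * (∑ j, ∑ k', f j k') := by
      simp only [Finset.sum_add_distrib]
      rw [hswap]; ring
    rw [← step1]
    simp only [hpair, Finset.mul_sum, Finset.sum_neg_distrib]
    congr 1
    calc (∑ j, ∑ k', ∑ i ∈ Finset.range (k + 1), D j k' *
            ((lam j)⁻¹ ^ (i + 1) * (lam k')⁻¹ ^ (k - i + 1)))
        = ∑ j, ∑ i ∈ Finset.range (k + 1), ∑ k', D j k' *
            ((lam j)⁻¹ ^ (i + 1) * (lam k')⁻¹ ^ (k - i + 1)) :=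
          Finset.sum_congr rfl fun j _ => Finset.sum_comm
      _ = ∑ i ∈ Finset.range (k + 1), ∑ j, ∑ k', D j k' *
            ((lam j)⁻¹ ^ (i + 1) * (lam k')⁻¹ ^ (k - i + 1)) := Finset.sum_comm
  have hS : (∑ j, ∑ k', f j k')
      = -∑ i ∈ Finset.range (k + 1),
          ((∑ j, ((lam j)⁻¹) ^ (i + 1) * p j * p j)
              * (∑ j, ((lam j)⁻¹) ^ (k - i + 1) * q j * q j)
           - (∑ j, ((lam j)⁻¹) ^ (i + 1) * p j * q j)
              * (∑ j, ((lam j)⁻¹) ^ (k - i + 1) * p j * q j)) := by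
    have h3 : 2 * (∑ j, ∑ k', f j k')
        = 2 * (-∑ i ∈ Finset.range (k + 1),
            ((∑ j, ((lam j)⁻¹) ^ (i + 1) * p j * p j)
                * (∑ j, ((lam j)⁻¹) ^ (k - i + 1) * q j * q j)
             - (∑ j, ((lam j)⁻¹) ^ (i + 1) * p j * q j)
                * (∑ j, ((lam j)⁻¹) ^ (k - i + 1) * p j * q j))) := by
      rw [h2S]
      simp only [hT]
      simp only [Finset.sum_sub_distrib, Finset.sum_add_distrib, ← Finset.mul_sum]
      rw [hrefl]
      ring
    linarith
  rw [hA, hS]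
  ring
end

section
/- For all integers j ≥ 0 and k ≥ 0, and for every point (p,q) ∈ ℝ^N × ℝ^N with ⟨p,p⟩ = 1 and ⟨p,q⟩ = 0, the Dirac–Poisson bracket of the backward integrals of motion vanishes: {F_{−j}, F_{−k}}_D(p,q) = 0, where F_{−k}(p,q) = ⟨Λ^{−k−1}p,p⟩ − Σ_{i=0}^{k} (⟨Λ^{−i−1}p,p⟩⟨Λ^{−k+i−1}q,q⟩ − ⟨Λ^{−i−1}p,q⟩⟨Λ^{−k+i−1}p,q⟩). -/
open Finset

/-- Partial derivative with respect to the coordinate `p_j`. -/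
noncomputable def pderivP {N : ℕ} (f : (Fin N → ℝ) × (Fin N → ℝ) → ℝ)
    (x : (Fin N → ℝ) × (Fin N → ℝ)) (j : Fin N) : ℝ :=
  fderiv ℝ f x (Pi.single j 1, 0)

/-- Partial derivative with respect to the coordinate `q_j`. -/
noncomputable def pderivQ {N : ℕ} (f : (Fin N → ℝ) × (Fin N → ℝ) → ℝ)
    (x : (Fin N → ℝ) × (Fin N → ℝ)) (j : Fin N) : ℝ :=
  fderiv ℝ f x (0, Pi.single j 1)

/-- The Poisson bracket `{f,g} = Σ_j (∂f/∂q_j ∂g/∂p_j - ∂f/∂p_j ∂g/∂q_j)`. -/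
noncomputable def poisson {N : ℕ} (f g : (Fin N → ℝ) × (Fin N → ℝ) → ℝ)
    (x : (Fin N → ℝ) × (Fin N → ℝ)) : ℝ :=
  ∑ j, (pderivQ f x j * pderivP g x j - pderivP f x j * pderivQ g x j)

/-- The Casimir `F(p,q) = ⟨p,q⟩`. -/
noncomputable def casF {N : ℕ} (x : (Fin N → ℝ) × (Fin N → ℝ)) : ℝ :=
  ∑ j, x.1 j * x.2 j

/-- The Casimir `G(p,q) = ⟨p,p⟩ - 1`. -/
noncomputable def casG {N : ℕ} (x : (Fin N → ℝ) × (Fin N → ℝ)) : ℝ :=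
  (∑ j, x.1 j * x.1 j) - 1

/-- The Dirac-Poisson bracket
`{f,g}_D = {f,g} + (1/{F,G})({f,F}{G,g} - {f,G}{F,g})`. -/
noncomputable def dirac {N : ℕ} (f g : (Fin N → ℝ) × (Fin N → ℝ) → ℝ)
    (x : (Fin N → ℝ) × (Fin N → ℝ)) : ℝ :=
  poisson f g x + (1 / poisson casF casG x) *
    (poisson f casF x * poisson casG g x - poisson f casG x * poisson casF g x)

/-- The backward integral of motion `F_{-k}`. -/
noncomputable def Fneg {N : ℕ} (lam : Fin N → ℝ) (k : ℕ)
    (x : (Fin N → ℝ) × (Fin N → ℝ)) : ℝ :=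
  (∑ j, ((lam j)⁻¹) ^ (k + 1) * x.1 j * x.1 j)
  - ∑ i ∈ Finset.range (k + 1),
      ((∑ j, ((lam j)⁻¹) ^ (i + 1) * x.1 j * x.1 j)
          * (∑ j, ((lam j)⁻¹) ^ (k - i + 1) * x.2 j * x.2 j)
       - (∑ j, ((lam j)⁻¹) ^ (i + 1) * x.1 j * x.2 j)
          * (∑ j, ((lam j)⁻¹) ^ (k - i + 1) * x.1 j * x.2 j))

----------------------------------------------------------------
-- Auxiliary infrastructure
----------------------------------------------------------------

section Aux

variable {N : ℕ}

/-- Coordinate projection `x ↦ x.1 a` as a continuous linear map. -/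
noncomputable def cP (a : Fin N) : ((Fin N → ℝ) × (Fin N → ℝ)) →L[ℝ] ℝ :=
  (ContinuousLinearMap.proj a).comp (ContinuousLinearMap.fst ℝ (Fin N → ℝ) (Fin N → ℝ))

/-- Coordinate projection `x ↦ x.2 a` as a continuous linear map. -/
noncomputable def cQ (a : Fin N) : ((Fin N → ℝ) × (Fin N → ℝ)) →L[ℝ] ℝ :=
  (ContinuousLinearMap.proj a).comp (ContinuousLinearMap.snd ℝ (Fin N → ℝ) (Fin N → ℝ))

/-- Moment `⟨Λ^{-m}p,p⟩`. -/
noncomputable def sM (c : Fin N → ℝ) (m : ℕ) (x : (Fin N → ℝ) × (Fin N → ℝ)) : ℝ :=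
  ∑ jj, c jj ^ m * x.1 jj * x.1 jj

/-- Moment `⟨Λ^{-m}q,q⟩`. -/
noncomputable def tM (c : Fin N → ℝ) (m : ℕ) (x : (Fin N → ℝ) × (Fin N → ℝ)) : ℝ :=
  ∑ jj, c jj ^ m * x.2 jj * x.2 jj

/-- Moment `⟨Λ^{-m}p,q⟩`. -/
noncomputable def uM (c : Fin N → ℝ) (m : ℕ) (x : (Fin N → ℝ) × (Fin N → ℝ)) : ℝ :=
  ∑ jj, c jj ^ m * x.1 jj * x.2 jj

/-- Derivative of `sM`. -/
noncomputable def DsM (c : Fin N → ℝ) (m : ℕ) (x : (Fin N → ℝ) × (Fin N → ℝ)) :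
    ((Fin N → ℝ) × (Fin N → ℝ)) →L[ℝ] ℝ :=
  ∑ jj, (c jj ^ m) • ((x.1 jj) • cP jj + (x.1 jj) • cP jj)

noncomputable def DtM (c : Fin N → ℝ) (m : ℕ) (x : (Fin N → ℝ) × (Fin N → ℝ)) :
    ((Fin N → ℝ) × (Fin N → ℝ)) →L[ℝ] ℝ :=
  ∑ jj, (c jj ^ m) • ((x.2 jj) • cQ jj + (x.2 jj) • cQ jj)

noncomputable def DuM (c : Fin N → ℝ) (m : ℕ) (x : (Fin N → ℝ) × (Fin N → ℝ)) :
    ((Fin N → ℝ) × (Fin N → ℝ)) →L[ℝ] ℝ :=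
  ∑ jj, (c jj ^ m) • ((x.1 jj) • cQ jj + (x.2 jj) • cP jj)

lemma hasFDerivAt_sM (c : Fin N → ℝ) (m : ℕ) (x : (Fin N → ℝ) × (Fin N → ℝ)) :
    HasFDerivAt (sM c m) (DsM c m x) x := by
  apply HasFDerivAt.fun_sum
  intro jj _
  have h1 : HasFDerivAt (fun y : (Fin N → ℝ) × (Fin N → ℝ) => y.1 jj) (cP jj) x :=
    (cP jj).hasFDerivAt
  simpa [mul_assoc] using (h1.mul h1).const_mul (c jj ^ m)

lemma hasFDerivAt_tM (c : Fin N → ℝ) (m : ℕ) (x : (Fin N → ℝ) × (Fin N → ℝ)) :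
    HasFDerivAt (tM c m) (DtM c m x) x := by
  apply HasFDerivAt.fun_sum
  intro jj _
  have h1 : HasFDerivAt (fun y : (Fin N → ℝ) × (Fin N → ℝ) => y.2 jj) (cQ jj) x :=
    (cQ jj).hasFDerivAt
  simpa [mul_assoc] using (h1.mul h1).const_mul (c jj ^ m)

lemma hasFDerivAt_uM (c : Fin N → ℝ) (m : ℕ) (x : (Fin N → ℝ) × (Fin N → ℝ)) :
    HasFDerivAt (uM c m) (DuM c m x) x := by
  apply HasFDerivAt.fun_sum
  intro jj _
  have h1 : HasFDerivAt (fun y : (Fin N → ℝ) × (Fin N → ℝ) => y.1 jj) (cP jj) x :=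
    (cP jj).hasFDerivAt
  have h2 : HasFDerivAt (fun y : (Fin N → ℝ) × (Fin N → ℝ) => y.2 jj) (cQ jj) x :=
    (cQ jj).hasFDerivAt
  simpa [mul_assoc] using (h1.mul h2).const_mul (c jj ^ m)

lemma DsM_applyP (c : Fin N → ℝ) (m : ℕ) (x : (Fin N → ℝ) × (Fin N → ℝ)) (a : Fin N) :
    DsM c m x (Pi.single a 1, (0 : Fin N → ℝ)) = 2 * (c a ^ m * x.1 a) := by
  simp [DsM, cP, Pi.single_apply, Finset.sum_add_distrib, Finset.sum_ite_eq']
  ring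

lemma DsM_applyQ (c : Fin N → ℝ) (m : ℕ) (x : (Fin N → ℝ) × (Fin N → ℝ)) (a : Fin N) :
    DsM c m x ((0 : Fin N → ℝ), Pi.single a 1) = 0 := by
  simp [DsM, cP]

lemma DtM_applyP (c : Fin N → ℝ) (m : ℕ) (x : (Fin N → ℝ) × (Fin N → ℝ)) (a : Fin N) :
    DtM c m x (Pi.single a 1, (0 : Fin N → ℝ)) = 0 := by
  simp [DtM, cQ]

lemma DtM_applyQ (c : Fin N → ℝ) (m : ℕ) (x : (Fin N → ℝ) × (Fin N → ℝ)) (a : Fin N) :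
    DtM c m x ((0 : Fin N → ℝ), Pi.single a 1) = 2 * (c a ^ m * x.2 a) := by
  simp [DtM, cQ, Pi.single_apply, Finset.sum_add_distrib, Finset.sum_ite_eq']
  ring

lemma DuM_applyP (c : Fin N → ℝ) (m : ℕ) (x : (Fin N → ℝ) × (Fin N → ℝ)) (a : Fin N) :
    DuM c m x (Pi.single a 1, (0 : Fin N → ℝ)) = c a ^ m * x.2 a := by
  simp [DuM, cP, cQ, Pi.single_apply, Finset.sum_add_distrib, Finset.sum_ite_eq']

lemma DuM_applyQ (c : Fin N → ℝ) (m : ℕ) (x : (Fin N → ℝ) × (Fin N → ℝ)) (a : Fin N) :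
    DuM c m x ((0 : Fin N → ℝ), Pi.single a 1) = c a ^ m * x.1 a := by
  simp [DuM, cP, cQ, Pi.single_apply, Finset.sum_add_distrib, Finset.sum_ite_eq']

/-- Derivative of `Fneg`. -/
noncomputable def DF (lam : Fin N → ℝ) (k : ℕ) (x : (Fin N → ℝ) × (Fin N → ℝ)) :
    ((Fin N → ℝ) × (Fin N → ℝ)) →L[ℝ] ℝ :=
  DsM (fun j => (lam j)⁻¹) (k+1) x - ∑ i ∈ Finset.range (k+1),
    ((sM (fun j => (lam j)⁻¹) (i+1) x • DtM (fun j => (lam j)⁻¹) (k-i+1) x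
      + tM (fun j => (lam j)⁻¹) (k-i+1) x • DsM (fun j => (lam j)⁻¹) (i+1) x)
     - (uM (fun j => (lam j)⁻¹) (i+1) x • DuM (fun j => (lam j)⁻¹) (k-i+1) x
        + uM (fun j => (lam j)⁻¹) (k-i+1) x • DuM (fun j => (lam j)⁻¹) (i+1) x))

lemma Fneg_eq (lam : Fin N → ℝ) (k : ℕ) :
    Fneg lam k = fun x => sM (fun j => (lam j)⁻¹) (k+1) x - ∑ i ∈ Finset.range (k+1),
      (sM (fun j => (lam j)⁻¹) (i+1) x * tM (fun j => (lam j)⁻¹) (k-i+1) x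
       - uM (fun j => (lam j)⁻¹) (i+1) x * uM (fun j => (lam j)⁻¹) (k-i+1) x) := rfl

lemma hasFDerivAt_Fneg (lam : Fin N → ℝ) (k : ℕ) (x : (Fin N → ℝ) × (Fin N → ℝ)) :
    HasFDerivAt (Fneg lam k) (DF lam k x) x := by
  rw [Fneg_eq, DF]
  exact (hasFDerivAt_sM _ _ _).sub (HasFDerivAt.fun_sum (fun i _ =>
    ((hasFDerivAt_sM _ _ _).mul (hasFDerivAt_tM _ _ _)).sub
    ((hasFDerivAt_uM _ _ _).mul (hasFDerivAt_uM _ _ _))))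

lemma pderivP_Fneg (lam : Fin N → ℝ) (k : ℕ) (x : (Fin N → ℝ) × (Fin N → ℝ)) (a : Fin N) :
    pderivP (Fneg lam k) x a =
      2 * ((lam a)⁻¹ ^ (k+1) * x.1 a) - ∑ i ∈ Finset.range (k+1),
        (tM (fun j => (lam j)⁻¹) (k-i+1) x * (2 * ((lam a)⁻¹ ^ (i+1) * x.1 a))
         - (uM (fun j => (lam j)⁻¹) (i+1) x * ((lam a)⁻¹ ^ (k-i+1) * x.2 a)
            + uM (fun j => (lam j)⁻¹) (k-i+1) x * ((lam a)⁻¹ ^ (i+1) * x.2 a))) := by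
  rw [pderivP, (hasFDerivAt_Fneg lam k x).fderiv]
  simp [DF, DsM_applyP, DtM_applyP, DuM_applyP, ContinuousLinearMap.sum_apply]

lemma pderivQ_Fneg (lam : Fin N → ℝ) (k : ℕ) (x : (Fin N → ℝ) × (Fin N → ℝ)) (a : Fin N) :
    pderivQ (Fneg lam k) x a =
      - ∑ i ∈ Finset.range (k+1),
        (sM (fun j => (lam j)⁻¹) (i+1) x * (2 * ((lam a)⁻¹ ^ (k-i+1) * x.2 a))
         - (uM (fun j => (lam j)⁻¹) (i+1) x * ((lam a)⁻¹ ^ (k-i+1) * x.1 a)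
            + uM (fun j => (lam j)⁻¹) (k-i+1) x * ((lam a)⁻¹ ^ (i+1) * x.1 a))) := by
  rw [pderivQ, (hasFDerivAt_Fneg lam k x).fderiv]
  simp [DF, DsM_applyQ, DtM_applyQ, DuM_applyQ, ContinuousLinearMap.sum_apply]

end Aux

section Aux2

variable {N : ℕ}

/-- Reflection helper for sums over `range n`. -/
lemma sum_reflect {n : ℕ} {f g : ℕ → ℝ} (h : ∀ i < n, f i = g (n - 1 - i)) :
    ∑ i ∈ Finset.range n, f i = ∑ i ∈ Finset.range n, g i := by
  rw [← Finset.sum_range_reflect g n]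
  exact Finset.sum_congr rfl fun i hi => h i (Finset.mem_range.mp hi)

/-- `p`-coefficient of the derivative of `Fneg`. -/
noncomputable def Af (c : Fin N → ℝ) (k : ℕ) (x : (Fin N → ℝ) × (Fin N → ℝ)) (a : Fin N) : ℝ :=
  c a ^ (k+1) - ∑ i ∈ Finset.range (k+1), c a ^ (i+1) * tM c (k-i+1) x

noncomputable def Bf (c : Fin N → ℝ) (k : ℕ) (x : (Fin N → ℝ) × (Fin N → ℝ)) (a : Fin N) : ℝ :=
  ∑ i ∈ Finset.range (k+1), c a ^ (i+1) * uM c (k-i+1) x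

noncomputable def Cf (c : Fin N → ℝ) (k : ℕ) (x : (Fin N → ℝ) × (Fin N → ℝ)) (a : Fin N) : ℝ :=
  ∑ i ∈ Finset.range (k+1), c a ^ (i+1) * sM c (k-i+1) x

lemma pderivP_ABC (lam : Fin N → ℝ) (k : ℕ) (x : (Fin N → ℝ) × (Fin N → ℝ)) (a : Fin N) :
    pderivP (Fneg lam k) x a =
      2 * Af (fun j => (lam j)⁻¹) k x a * x.1 a + 2 * Bf (fun j => (lam j)⁻¹) k x a * x.2 a := by
  set c : Fin N → ℝ := fun j => (lam j)⁻¹ with hc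
  rw [pderivP_Fneg]
  have h0 : ∑ i ∈ Finset.range (k+1),
      (tM c (k-i+1) x * (2 * (c a ^ (i+1) * x.1 a))
       - (uM c (i+1) x * (c a ^ (k-i+1) * x.2 a) + uM c (k-i+1) x * (c a ^ (i+1) * x.2 a)))
      = (∑ i ∈ Finset.range (k+1), tM c (k-i+1) x * (2 * (c a ^ (i+1) * x.1 a)))
        - ((∑ i ∈ Finset.range (k+1), uM c (i+1) x * (c a ^ (k-i+1) * x.2 a))
           + ∑ i ∈ Finset.range (k+1), uM c (k-i+1) x * (c a ^ (i+1) * x.2 a)) := by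
    rw [Finset.sum_sub_distrib, Finset.sum_add_distrib]
  have hre : ∑ i ∈ Finset.range (k+1), uM c (i+1) x * (c a ^ (k-i+1) * x.2 a)
      = ∑ i ∈ Finset.range (k+1), uM c (k-i+1) x * (c a ^ (i+1) * x.2 a) := by
    apply sum_reflect
    intro i hi
    rw [show k+1-1-i = k-i from by omega, show k-(k-i) = i from by omega]
  have h2 : ∑ i ∈ Finset.range (k+1), tM c (k-i+1) x * (2 * (c a ^ (i+1) * x.1 a))
      = (∑ i ∈ Finset.range (k+1), c a ^ (i+1) * tM c (k-i+1) x) * (2 * x.1 a) := by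
    rw [Finset.sum_mul]; exact Finset.sum_congr rfl fun i _ => by ring
  have h3 : ∑ i ∈ Finset.range (k+1), uM c (k-i+1) x * (c a ^ (i+1) * x.2 a)
      = (∑ i ∈ Finset.range (k+1), c a ^ (i+1) * uM c (k-i+1) x) * x.2 a := by
    rw [Finset.sum_mul]; exact Finset.sum_congr rfl fun i _ => by ring
  rw [h0, hre, h2, h3, Af, Bf]
  ring

lemma pderivQ_ABC (lam : Fin N → ℝ) (k : ℕ) (x : (Fin N → ℝ) × (Fin N → ℝ)) (a : Fin N) :
    pderivQ (Fneg lam k) x a =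
      2 * Bf (fun j => (lam j)⁻¹) k x a * x.1 a - 2 * Cf (fun j => (lam j)⁻¹) k x a * x.2 a := by
  set c : Fin N → ℝ := fun j => (lam j)⁻¹ with hc
  rw [pderivQ_Fneg]
  have h0 : ∑ i ∈ Finset.range (k+1),
      (sM c (i+1) x * (2 * (c a ^ (k-i+1) * x.2 a))
       - (uM c (i+1) x * (c a ^ (k-i+1) * x.1 a) + uM c (k-i+1) x * (c a ^ (i+1) * x.1 a)))
      = (∑ i ∈ Finset.range (k+1), sM c (i+1) x * (2 * (c a ^ (k-i+1) * x.2 a)))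
        - ((∑ i ∈ Finset.range (k+1), uM c (i+1) x * (c a ^ (k-i+1) * x.1 a))
           + ∑ i ∈ Finset.range (k+1), uM c (k-i+1) x * (c a ^ (i+1) * x.1 a)) := by
    rw [Finset.sum_sub_distrib, Finset.sum_add_distrib]
  have hre : ∑ i ∈ Finset.range (k+1), uM c (i+1) x * (c a ^ (k-i+1) * x.1 a)
      = ∑ i ∈ Finset.range (k+1), uM c (k-i+1) x * (c a ^ (i+1) * x.1 a) := by
    apply sum_reflect
    intro i hi
    rw [show k+1-1-i = k-i from by omega, show k-(k-i) = i from by omega]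
  have hres : ∑ i ∈ Finset.range (k+1), sM c (i+1) x * (2 * (c a ^ (k-i+1) * x.2 a))
      = ∑ i ∈ Finset.range (k+1), sM c (k-i+1) x * (2 * (c a ^ (i+1) * x.2 a)) := by
    apply sum_reflect
    intro i hi
    rw [show k+1-1-i = k-i from by omega, show k-(k-i) = i from by omega]
  have h2 : ∑ i ∈ Finset.range (k+1), sM c (k-i+1) x * (2 * (c a ^ (i+1) * x.2 a))
      = (∑ i ∈ Finset.range (k+1), c a ^ (i+1) * sM c (k-i+1) x) * (2 * x.2 a) := by
    rw [Finset.sum_mul]; exact Finset.sum_congr rfl fun i _ => by ring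
  have h3 : ∑ i ∈ Finset.range (k+1), uM c (k-i+1) x * (c a ^ (i+1) * x.1 a)
      = (∑ i ∈ Finset.range (k+1), c a ^ (i+1) * uM c (k-i+1) x) * x.1 a := by
    rw [Finset.sum_mul]; exact Finset.sum_congr rfl fun i _ => by ring
  rw [h0, hre, hres, h2, h3, Bf, Cf]
  ring

/-- Contracted moment `∑_a c_a^m X_a`. -/
noncomputable def MX (c X : Fin N → ℝ) (m : ℕ) : ℝ := ∑ a, c a ^ m * X a

/-- Master contraction lemma. -/
lemma master (c : Fin N → ℝ) (d₁ e₁ d₂ e₂ : ℝ) (f g : ℕ → ℝ) (J K : ℕ) (X : Fin N → ℝ) :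
    ∑ a, (d₁ * c a ^ (J+1) + e₁ * ∑ i ∈ Finset.range (J+1), c a ^ (i+1) * f i)
        * (d₂ * c a ^ (K+1) + e₂ * ∑ l ∈ Finset.range (K+1), c a ^ (l+1) * g l) * X a
    = d₁*d₂ * MX c X (J+K+2)
      + d₁*e₂ * (∑ l ∈ Finset.range (K+1), g l * MX c X (J+l+2))
      + e₁*d₂ * (∑ i ∈ Finset.range (J+1), f i * MX c X (i+K+2))
      + e₁*e₂ * (∑ i ∈ Finset.range (J+1), ∑ l ∈ Finset.range (K+1),
          f i * g l * MX c X (i+l+2)) := by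
  have key : ∀ a : Fin N,
      (d₁ * c a ^ (J+1) + e₁ * ∑ i ∈ Finset.range (J+1), c a ^ (i+1) * f i)
        * (d₂ * c a ^ (K+1) + e₂ * ∑ l ∈ Finset.range (K+1), c a ^ (l+1) * g l) * X a
      = d₁*d₂*(c a ^ (J+K+2) * X a)
        + d₁*e₂*(∑ l ∈ Finset.range (K+1), g l * (c a ^ (J+l+2) * X a))
        + e₁*d₂*(∑ i ∈ Finset.range (J+1), f i * (c a ^ (i+K+2) * X a))
        + e₁*e₂*(∑ i ∈ Finset.range (J+1), ∑ l ∈ Finset.range (K+1),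
            f i * g l * (c a ^ (i+l+2) * X a)) := by
    intro a
    have e1 : ∑ l ∈ Finset.range (K+1), g l * (c a ^ (J+l+2) * X a)
        = (∑ l ∈ Finset.range (K+1), c a ^ (l+1) * g l) * (c a ^ (J+1) * X a) := by
      rw [Finset.sum_mul]
      refine Finset.sum_congr rfl fun l _ => ?_
      rw [show J+l+2 = (l+1)+(J+1) from by ring, pow_add]; ring
    have e2 : ∑ i ∈ Finset.range (J+1), f i * (c a ^ (i+K+2) * X a)
        = (∑ i ∈ Finset.range (J+1), c a ^ (i+1) * f i) * (c a ^ (K+1) * X a) := by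
      rw [Finset.sum_mul]
      refine Finset.sum_congr rfl fun i _ => ?_
      rw [show i+K+2 = (i+1)+(K+1) from by ring, pow_add]; ring
    have e3 : ∑ i ∈ Finset.range (J+1), ∑ l ∈ Finset.range (K+1),
          f i * g l * (c a ^ (i+l+2) * X a)
        = (∑ i ∈ Finset.range (J+1), c a ^ (i+1) * f i)
          * ((∑ l ∈ Finset.range (K+1), c a ^ (l+1) * g l) * X a) := by
      rw [Finset.sum_mul, Finset.sum_mul]
      refine Finset.sum_congr rfl fun i _ => ?_
      rw [Finset.mul_sum]
      refine Finset.sum_congr rfl fun l _ => ?_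
      rw [show i+l+2 = (i+1)+(l+1) from by ring, pow_add]; ring
    rw [e1, e2, e3, show J+K+2 = (J+1)+(K+1) from by ring, pow_add]
    ring
  rw [Finset.sum_congr rfl fun a _ => key a]
  rw [Finset.sum_add_distrib, Finset.sum_add_distrib, Finset.sum_add_distrib]
  congr 1
  · congr 1
    · congr 1
      · rw [← Finset.mul_sum]; rfl
      · rw [← Finset.mul_sum, Finset.sum_comm]
        congr 1
        exact Finset.sum_congr rfl fun l _ => by rw [← Finset.mul_sum]; rfl
    · rw [← Finset.mul_sum, Finset.sum_comm]
      congr 1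
      exact Finset.sum_congr rfl fun i _ => by rw [← Finset.mul_sum]; rfl
  · rw [← Finset.mul_sum]
    congr 1
    rw [Finset.sum_comm]
    refine Finset.sum_congr rfl fun i _ => ?_
    rw [Finset.sum_comm]
    exact Finset.sum_congr rfl fun l _ => by rw [← Finset.mul_sum]; rfl

end Aux2

section Aux3

variable {N : ℕ}

lemma MX_pp (c : Fin N → ℝ) (p q : Fin N → ℝ) (m : ℕ) :
    MX c (fun a => p a * p a) m = sM c m (p, q) := by
  unfold MX sM; exact Finset.sum_congr rfl fun a _ => by ring

lemma MX_qq (c : Fin N → ℝ) (p q : Fin N → ℝ) (m : ℕ) :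
    MX c (fun a => q a * q a) m = tM c m (p, q) := by
  unfold MX tM; exact Finset.sum_congr rfl fun a _ => by ring

lemma MX_pq (c : Fin N → ℝ) (p q : Fin N → ℝ) (m : ℕ) :
    MX c (fun a => p a * q a) m = uM c m (p, q) := by
  unfold MX uM; exact Finset.sum_congr rfl fun a _ => by ring

lemma sum_BA (c : Fin N → ℝ) (x : (Fin N → ℝ) × (Fin N → ℝ)) (J K : ℕ) (X : Fin N → ℝ) :
    ∑ a, Bf c J x a * Af c K x a * X a
    = (∑ i ∈ Finset.range (J+1), uM c (J-i+1) x * MX c X (i+K+2))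
      - ∑ i ∈ Finset.range (J+1), ∑ l ∈ Finset.range (K+1),
          uM c (J-i+1) x * tM c (K-l+1) x * MX c X (i+l+2) := by
  have h := master c 0 1 1 (-1) (fun i => uM c (J-i+1) x) (fun l => tM c (K-l+1) x) J K X
  calc ∑ a, Bf c J x a * Af c K x a * X a
      = ∑ a, (0 * c a ^ (J+1) + 1 * ∑ i ∈ Finset.range (J+1), c a ^ (i+1) * uM c (J-i+1) x)
          * (1 * c a ^ (K+1) + (-1) * ∑ l ∈ Finset.range (K+1), c a ^ (l+1) * tM c (K-l+1) x)
          * X a := by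
        refine Finset.sum_congr rfl fun a _ => ?_
        rw [Af, Bf]; ring
    _ = _ := by rw [h]; ring

lemma sum_AB (c : Fin N → ℝ) (x : (Fin N → ℝ) × (Fin N → ℝ)) (J K : ℕ) (X : Fin N → ℝ) :
    ∑ a, Af c J x a * Bf c K x a * X a
    = (∑ l ∈ Finset.range (K+1), uM c (K-l+1) x * MX c X (J+l+2))
      - ∑ i ∈ Finset.range (J+1), ∑ l ∈ Finset.range (K+1),
          tM c (J-i+1) x * uM c (K-l+1) x * MX c X (i+l+2) := by
  have h := master c 1 (-1) 0 1 (fun i => tM c (J-i+1) x) (fun l => uM c (K-l+1) x) J K X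
  calc ∑ a, Af c J x a * Bf c K x a * X a
      = ∑ a, (1 * c a ^ (J+1) + (-1) * ∑ i ∈ Finset.range (J+1), c a ^ (i+1) * tM c (J-i+1) x)
          * (0 * c a ^ (K+1) + 1 * ∑ l ∈ Finset.range (K+1), c a ^ (l+1) * uM c (K-l+1) x)
          * X a := by
        refine Finset.sum_congr rfl fun a _ => ?_
        rw [Af, Bf]; ring
    _ = _ := by rw [h]; ring

lemma sum_AC (c : Fin N → ℝ) (x : (Fin N → ℝ) × (Fin N → ℝ)) (J K : ℕ) (X : Fin N → ℝ) :
    ∑ a, Af c J x a * Cf c K x a * X a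
    = (∑ l ∈ Finset.range (K+1), sM c (K-l+1) x * MX c X (J+l+2))
      - ∑ i ∈ Finset.range (J+1), ∑ l ∈ Finset.range (K+1),
          tM c (J-i+1) x * sM c (K-l+1) x * MX c X (i+l+2) := by
  have h := master c 1 (-1) 0 1 (fun i => tM c (J-i+1) x) (fun l => sM c (K-l+1) x) J K X
  calc ∑ a, Af c J x a * Cf c K x a * X a
      = ∑ a, (1 * c a ^ (J+1) + (-1) * ∑ i ∈ Finset.range (J+1), c a ^ (i+1) * tM c (J-i+1) x)
          * (0 * c a ^ (K+1) + 1 * ∑ l ∈ Finset.range (K+1), c a ^ (l+1) * sM c (K-l+1) x)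
          * X a := by
        refine Finset.sum_congr rfl fun a _ => ?_
        rw [Af, Cf]; ring
    _ = _ := by rw [h]; ring

lemma sum_CA (c : Fin N → ℝ) (x : (Fin N → ℝ) × (Fin N → ℝ)) (J K : ℕ) (X : Fin N → ℝ) :
    ∑ a, Cf c J x a * Af c K x a * X a
    = (∑ i ∈ Finset.range (J+1), sM c (J-i+1) x * MX c X (i+K+2))
      - ∑ i ∈ Finset.range (J+1), ∑ l ∈ Finset.range (K+1),
          sM c (J-i+1) x * tM c (K-l+1) x * MX c X (i+l+2) := by
  have h := master c 0 1 1 (-1) (fun i => sM c (J-i+1) x) (fun l => tM c (K-l+1) x) J K X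
  calc ∑ a, Cf c J x a * Af c K x a * X a
      = ∑ a, (0 * c a ^ (J+1) + 1 * ∑ i ∈ Finset.range (J+1), c a ^ (i+1) * sM c (J-i+1) x)
          * (1 * c a ^ (K+1) + (-1) * ∑ l ∈ Finset.range (K+1), c a ^ (l+1) * tM c (K-l+1) x)
          * X a := by
        refine Finset.sum_congr rfl fun a _ => ?_
        rw [Af, Cf]; ring
    _ = _ := by rw [h]; ring

lemma sum_BC (c : Fin N → ℝ) (x : (Fin N → ℝ) × (Fin N → ℝ)) (J K : ℕ) (X : Fin N → ℝ) :
    ∑ a, Bf c J x a * Cf c K x a * X a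
    = ∑ i ∈ Finset.range (J+1), ∑ l ∈ Finset.range (K+1),
        uM c (J-i+1) x * sM c (K-l+1) x * MX c X (i+l+2) := by
  have h := master c 0 1 0 1 (fun i => uM c (J-i+1) x) (fun l => sM c (K-l+1) x) J K X
  calc ∑ a, Bf c J x a * Cf c K x a * X a
      = ∑ a, (0 * c a ^ (J+1) + 1 * ∑ i ∈ Finset.range (J+1), c a ^ (i+1) * uM c (J-i+1) x)
          * (0 * c a ^ (K+1) + 1 * ∑ l ∈ Finset.range (K+1), c a ^ (l+1) * sM c (K-l+1) x)
          * X a := by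
        refine Finset.sum_congr rfl fun a _ => ?_
        rw [Bf, Cf]; ring
    _ = _ := by rw [h]; ring

lemma sum_CB (c : Fin N → ℝ) (x : (Fin N → ℝ) × (Fin N → ℝ)) (J K : ℕ) (X : Fin N → ℝ) :
    ∑ a, Cf c J x a * Bf c K x a * X a
    = ∑ i ∈ Finset.range (J+1), ∑ l ∈ Finset.range (K+1),
        sM c (J-i+1) x * uM c (K-l+1) x * MX c X (i+l+2) := by
  have h := master c 0 1 0 1 (fun i => sM c (J-i+1) x) (fun l => uM c (K-l+1) x) J K X
  calc ∑ a, Cf c J x a * Bf c K x a * X a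
      = ∑ a, (0 * c a ^ (J+1) + 1 * ∑ i ∈ Finset.range (J+1), c a ^ (i+1) * sM c (J-i+1) x)
          * (0 * c a ^ (K+1) + 1 * ∑ l ∈ Finset.range (K+1), c a ^ (l+1) * uM c (K-l+1) x)
          * X a := by
        refine Finset.sum_congr rfl fun a _ => ?_
        rw [Bf, Cf]; ring
    _ = _ := by rw [h]; ring

/-- The quadratic combinatorial identity. -/
lemma keyQuadratic (sf uf : ℕ → ℝ) (j k : ℕ) :
    (∑ i ∈ Finset.range (j+1), uf (j-i+1) * sf (i+k+2))
    - (∑ l ∈ Finset.range (k+1), uf (k-l+1) * sf (j+l+2))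
    + ((∑ l ∈ Finset.range (k+1), sf (k-l+1) * uf (j+l+2))
       - ∑ i ∈ Finset.range (j+1), sf (j-i+1) * uf (i+k+2)) = 0 := by
  set g : ℕ → ℝ := fun n => uf (n+1) * sf (j+k+2-n) with hg
  have h1 : ∑ i ∈ Finset.range (j+1), uf (j-i+1) * sf (i+k+2)
      = ∑ n ∈ Finset.range (j+1), g n := by
    apply sum_reflect
    intro i hi
    show uf (j-i+1) * sf (i+k+2) = uf (j+1-1-i+1) * sf (j+k+2-(j+1-1-i))
    rw [show j+1-1-i = j-i from by omega, show j+k+2-(j-i) = i+k+2 from by omega]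
  have h2 : ∑ l ∈ Finset.range (k+1), uf (k-l+1) * sf (j+l+2)
      = ∑ n ∈ Finset.range (k+1), g n := by
    apply sum_reflect
    intro l hl
    show uf (k-l+1) * sf (j+l+2) = uf (k+1-1-l+1) * sf (j+k+2-(k+1-1-l))
    rw [show k+1-1-l = k-l from by omega, show j+k+2-(k-l) = j+l+2 from by omega]
  have h3 : ∑ l ∈ Finset.range (k+1), sf (k-l+1) * uf (j+l+2)
      = ∑ n ∈ Finset.range (k+1), g (j+1+n) := by
    refine Finset.sum_congr rfl fun l hl => ?_
    rw [Finset.mem_range] at hl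
    show sf (k-l+1) * uf (j+l+2) = uf (j+1+l+1) * sf (j+k+2-(j+1+l))
    rw [show j+1+l+1 = j+l+2 from by omega, show j+k+2-(j+1+l) = k-l+1 from by omega]
    ring
  have h4 : ∑ i ∈ Finset.range (j+1), sf (j-i+1) * uf (i+k+2)
      = ∑ n ∈ Finset.range (j+1), g (k+1+n) := by
    refine Finset.sum_congr rfl fun i hi => ?_
    rw [Finset.mem_range] at hi
    show sf (j-i+1) * uf (i+k+2) = uf (k+1+i+1) * sf (j+k+2-(k+1+i))
    rw [show k+1+i+1 = i+k+2 from by omega, show j+k+2-(k+1+i) = j-i+1 from by omega]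
    ring
  have hA := Finset.sum_range_add g (j+1) (k+1)
  have hB := Finset.sum_range_add g (k+1) (j+1)
  rw [show j+1+(k+1) = k+1+(j+1) from by ring] at hA
  rw [h1, h2, h3, h4]
  linarith

/-- Sum over a finset vanishes if there is a sign-reversing involution. -/
lemma sum_neg_inv {α : Type*} (s : Finset α) (F : α → ℝ) (σ : α → α)
    (hmem : ∀ x ∈ s, σ x ∈ s) (hinv : ∀ x ∈ s, σ (σ x) = x)
    (hneg : ∀ x ∈ s, F (σ x) = -F x) :
    ∑ x ∈ s, F x = 0 := by
  have h : ∑ x ∈ s, F x = ∑ x ∈ s, (fun y => -F y) x := by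
    refine Finset.sum_nbij' σ σ hmem hmem hinv hinv fun a ha => ?_
    simp [hneg a ha]
  simp only [Finset.sum_neg_distrib] at h
  linarith

/-- Rectangle sum of a totally antisymmetric kernel over the "simplex slice" vanishes. -/
lemma rect_zero (ψ : ℕ → ℕ → ℕ → ℝ) (h1 : ∀ a b c, ψ b a c = -ψ a b c)
    (h2 : ∀ a b c, ψ a c b = -ψ a b c) (j k : ℕ) :
    ∑ i ∈ Finset.range (j+1), ∑ l ∈ Finset.range (k+1), ψ (i+1) (l+1) (j+k+2-i-l) = 0 := by
  have h3 : ∀ a b c, ψ c b a = -ψ a b c := by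
    intro a b c
    have e1 : ψ c b a = -ψ b c a := h1 b c a
    have e2 : ψ b c a = -ψ b a c := h2 b a c
    have e3 : ψ b a c = -ψ a b c := h1 a b c
    rw [e1, e2, e3]; ring
  set n : ℕ := j+k+2 with hn
  set F : ℕ × ℕ → ℝ := fun x => ψ (x.1+1) (x.2+1) (n - x.1 - x.2) with hF
  set sOm : Finset (ℕ × ℕ) :=
    (Finset.range n ×ˢ Finset.range n).filter (fun x : ℕ × ℕ => x.1 + x.2 ≤ j+k+1) with hsOm
  have hmemOm : ∀ x : ℕ × ℕ, x ∈ sOm ↔ (x.1 < n ∧ x.2 < n ∧ x.1 + x.2 ≤ j+k+1) := by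
    intro x
    simp [hsOm, Finset.mem_filter, Finset.mem_product, Finset.mem_range, and_assoc]
  -- the full sum vanishes
  have hOm : ∑ x ∈ sOm, F x = 0 := by
    apply sum_neg_inv sOm F (fun x => (x.2, x.1))
    · intro x hx; rw [hmemOm] at *; omega
    · intro x hx; rfl
    · intro x hx
      rw [hmemOm] at hx
      simp only [hF]
      rw [show n - x.2 - x.1 = n - x.1 - x.2 from by omega]
      exact h1 (x.1+1) (x.2+1) (n - x.1 - x.2)
  -- the part with x.1 ≥ j+1 vanishes
  have hA : ∑ x ∈ sOm.filter (fun x : ℕ × ℕ => j+1 ≤ x.1), F x = 0 := by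
    apply sum_neg_inv _ F (fun x => (x.1, j+k+1-x.1-x.2))
    · intro x hx
      rw [Finset.mem_filter] at *
      rw [hmemOm] at *
      constructor
      · omega
      · exact hx.2
    · intro x hx
      rw [Finset.mem_filter, hmemOm] at hx
      have : j+k+1-x.1-(j+k+1-x.1-x.2) = x.2 := by omega
      simp [this]
    · intro x hx
      rw [Finset.mem_filter, hmemOm] at hx
      simp only [hF]
      rw [show n - x.1 - (j+k+1-x.1-x.2) = x.2+1 from by omega,
          show j+k+1-x.1-x.2+1 = n - x.1 - x.2 from by omega]
      exact h2 (x.1+1) (x.2+1) (n - x.1 - x.2)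
  -- the part with x.1 ≤ j and x.2 ≥ k+1 vanishes
  have hB : ∑ x ∈ (sOm.filter (fun x : ℕ × ℕ => ¬ j+1 ≤ x.1)).filter
      (fun x : ℕ × ℕ => k+1 ≤ x.2), F x = 0 := by
    apply sum_neg_inv _ F (fun x => (j+k+1-x.1-x.2, x.2))
    · intro x hx
      rw [Finset.mem_filter] at *
      rw [Finset.mem_filter] at *
      rw [hmemOm] at *
      omega
    · intro x hx
      rw [Finset.mem_filter, Finset.mem_filter, hmemOm] at hx
      have : j+k+1-(j+k+1-x.1-x.2)-x.2 = x.1 := by omega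
      simp [this]
    · intro x hx
      rw [Finset.mem_filter, Finset.mem_filter, hmemOm] at hx
      simp only [hF]
      rw [show n - (j+k+1-x.1-x.2) - x.2 = x.1+1 from by omega,
          show j+k+1-x.1-x.2+1 = n - x.1 - x.2 from by omega]
      exact h3 (x.1+1) (x.2+1) (n - x.1 - x.2)
  -- the remaining part is the rectangle
  have hR : (sOm.filter (fun x : ℕ × ℕ => ¬ j+1 ≤ x.1)).filter
      (fun x : ℕ × ℕ => ¬ k+1 ≤ x.2) = Finset.range (j+1) ×ˢ Finset.range (k+1) := by
    ext x
    rw [Finset.mem_filter, Finset.mem_filter, hmemOm, Finset.mem_product,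
        Finset.mem_range, Finset.mem_range]
    omega
  have hsplit1 := Finset.sum_filter_add_sum_filter_not sOm (fun x : ℕ × ℕ => j+1 ≤ x.1) F
  have hsplit2 := Finset.sum_filter_add_sum_filter_not
    (sOm.filter (fun x : ℕ × ℕ => ¬ j+1 ≤ x.1)) (fun x : ℕ × ℕ => k+1 ≤ x.2) F
  have hrect : ∑ x ∈ Finset.range (j+1) ×ˢ Finset.range (k+1), F x
      = ∑ i ∈ Finset.range (j+1), ∑ l ∈ Finset.range (k+1), ψ (i+1) (l+1) (j+k+2-i-l) := by
    rw [Finset.sum_product]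
  rw [hR, hrect] at hsplit2
  linarith

/-- Double reflection of a rectangle double sum. -/
lemma double_reflect (j k : ℕ) (F : ℕ → ℕ → ℕ → ℝ) :
    ∑ i ∈ Finset.range (j+1), ∑ l ∈ Finset.range (k+1), F (j-i) (k-l) (i+l)
    = ∑ i ∈ Finset.range (j+1), ∑ l ∈ Finset.range (k+1), F i l (j+k-i-l) := by
  apply sum_reflect
  intro i hi
  rw [show j+1-1-i = j-i from by omega]
  apply sum_reflect
  intro l hl
  rw [show k+1-1-l = k-l from by omega, show j+k-(j-i)-(k-l) = i+l from by omega]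

/-- The cubic combinatorial identity. -/
lemma keyCubic (sf tf uf : ℕ → ℝ) (j k : ℕ) :
    -(∑ i ∈ Finset.range (j+1), ∑ l ∈ Finset.range (k+1),
        uf (j-i+1) * tf (k-l+1) * sf (i+l+2))
    + (∑ i ∈ Finset.range (j+1), ∑ l ∈ Finset.range (k+1),
        tf (j-i+1) * uf (k-l+1) * sf (i+l+2))
    - (∑ i ∈ Finset.range (j+1), ∑ l ∈ Finset.range (k+1),
        tf (j-i+1) * sf (k-l+1) * uf (i+l+2))
    + (∑ i ∈ Finset.range (j+1), ∑ l ∈ Finset.range (k+1),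
        sf (j-i+1) * tf (k-l+1) * uf (i+l+2))
    + (∑ i ∈ Finset.range (j+1), ∑ l ∈ Finset.range (k+1),
        uf (j-i+1) * sf (k-l+1) * tf (i+l+2))
    - (∑ i ∈ Finset.range (j+1), ∑ l ∈ Finset.range (k+1),
        sf (j-i+1) * uf (k-l+1) * tf (i+l+2)) = 0 := by
  set ψ : ℕ → ℕ → ℕ → ℝ := fun a b c =>
    -(uf a * tf b * sf c) + tf a * uf b * sf c - tf a * sf b * uf c
    + sf a * tf b * uf c + uf a * sf b * tf c - sf a * uf b * tf c with hψ
  have hmerge : -(∑ i ∈ Finset.range (j+1), ∑ l ∈ Finset.range (k+1),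
        uf (j-i+1) * tf (k-l+1) * sf (i+l+2))
    + (∑ i ∈ Finset.range (j+1), ∑ l ∈ Finset.range (k+1),
        tf (j-i+1) * uf (k-l+1) * sf (i+l+2))
    - (∑ i ∈ Finset.range (j+1), ∑ l ∈ Finset.range (k+1),
        tf (j-i+1) * sf (k-l+1) * uf (i+l+2))
    + (∑ i ∈ Finset.range (j+1), ∑ l ∈ Finset.range (k+1),
        sf (j-i+1) * tf (k-l+1) * uf (i+l+2))
    + (∑ i ∈ Finset.range (j+1), ∑ l ∈ Finset.range (k+1),
        uf (j-i+1) * sf (k-l+1) * tf (i+l+2))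
    - (∑ i ∈ Finset.range (j+1), ∑ l ∈ Finset.range (k+1),
        sf (j-i+1) * uf (k-l+1) * tf (i+l+2))
    = ∑ i ∈ Finset.range (j+1), ∑ l ∈ Finset.range (k+1),
        ψ (j-i+1) (k-l+1) (i+l+2) := by
    simp only [hψ, Finset.sum_add_distrib, Finset.sum_sub_distrib, Finset.sum_neg_distrib]
  rw [hmerge]
  have hrefl : ∑ i ∈ Finset.range (j+1), ∑ l ∈ Finset.range (k+1), ψ (j-i+1) (k-l+1) (i+l+2)
      = ∑ i ∈ Finset.range (j+1), ∑ l ∈ Finset.range (k+1), ψ (i+1) (l+1) (j+k+2-i-l) := by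
    have := double_reflect j k (fun a b m => ψ (a+1) (b+1) (m+2))
    rw [this]
    refine Finset.sum_congr rfl fun i hi => Finset.sum_congr rfl fun l hl => ?_
    rw [Finset.mem_range] at hi hl
    rw [show j+k-i-l+2 = j+k+2-i-l from by omega]
  rw [hrefl]
  exact rect_zero ψ (fun a b c => by rw [hψ]; ring) (fun a b c => by rw [hψ]; ring) j k

end Aux3

section Aux4

variable {N : ℕ}

lemma pderivP_ABC' (lam : Fin N → ℝ) (k : ℕ) (p q : Fin N → ℝ) (a : Fin N) :
    pderivP (Fneg lam k) (p, q) a =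
      2 * Af (fun i => (lam i)⁻¹) k (p, q) a * p a
      + 2 * Bf (fun i => (lam i)⁻¹) k (p, q) a * q a :=
  pderivP_ABC lam k (p, q) a

lemma pderivQ_ABC' (lam : Fin N → ℝ) (k : ℕ) (p q : Fin N → ℝ) (a : Fin N) :
    pderivQ (Fneg lam k) (p, q) a =
      2 * Bf (fun i => (lam i)⁻¹) k (p, q) a * p a
      - 2 * Cf (fun i => (lam i)⁻¹) k (p, q) a * q a :=
  pderivQ_ABC lam k (p, q) a

/-- Key Lemma A : the plain Poisson bracket of two backward integrals vanishes identically. -/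
lemma mainA (lam : Fin N → ℝ) (j k : ℕ) (p q : Fin N → ℝ) :
    poisson (Fneg lam j) (Fneg lam k) (p, q) = 0 := by
  set c : Fin N → ℝ := fun i => (lam i)⁻¹ with hcdef
  have hpt : ∀ a : Fin N,
      pderivQ (Fneg lam j) (p, q) a * pderivP (Fneg lam k) (p, q) a
      - pderivP (Fneg lam j) (p, q) a * pderivQ (Fneg lam k) (p, q) a
      = 4 * (Bf c j (p, q) a * Af c k (p, q) a * (p a * p a))
        - 4 * (Af c j (p, q) a * Bf c k (p, q) a * (p a * p a))
        + 4 * (Af c j (p, q) a * Cf c k (p, q) a * (p a * q a))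
        - 4 * (Cf c j (p, q) a * Af c k (p, q) a * (p a * q a))
        + 4 * (Bf c j (p, q) a * Cf c k (p, q) a * (q a * q a))
        - 4 * (Cf c j (p, q) a * Bf c k (p, q) a * (q a * q a)) := by
    intro a
    rw [pderivQ_ABC' lam j p q a, pderivP_ABC' lam k p q a,
        pderivP_ABC' lam j p q a, pderivQ_ABC' lam k p q a]
    ring
  unfold poisson
  rw [Finset.sum_congr rfl fun a _ => hpt a]
  simp only [Finset.sum_add_distrib, Finset.sum_sub_distrib, ← Finset.mul_sum]
  have hBA := sum_BA c (p, q) j k (fun a => p a * p a)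
  have hAB := sum_AB c (p, q) j k (fun a => p a * p a)
  have hAC := sum_AC c (p, q) j k (fun a => p a * q a)
  have hCA := sum_CA c (p, q) j k (fun a => p a * q a)
  have hBC := sum_BC c (p, q) j k (fun a => q a * q a)
  have hCB := sum_CB c (p, q) j k (fun a => q a * q a)
  simp only [MX_pp c p q, MX_qq c p q, MX_pq c p q] at hBA hAB hAC hCA hBC hCB
  rw [hBA, hAB, hAC, hCA, hBC, hCB]
  have hQ := keyQuadratic (fun m => sM c m (p, q)) (fun m => uM c m (p, q)) j k
  have hC := keyCubic (fun m => sM c m (p, q)) (fun m => tM c m (p, q))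
    (fun m => uM c m (p, q)) j k
  linarith

/-- Derivative of `casG`. -/
noncomputable def DG (x : (Fin N → ℝ) × (Fin N → ℝ)) :
    ((Fin N → ℝ) × (Fin N → ℝ)) →L[ℝ] ℝ :=
  ∑ jj, ((x.1 jj) • cP jj + (x.1 jj) • cP jj)

lemma hasFDerivAt_casG (x : (Fin N → ℝ) × (Fin N → ℝ)) :
    HasFDerivAt casG (DG x) x := by
  unfold casG DG
  apply HasFDerivAt.sub_const
  apply HasFDerivAt.fun_sum
  intro jj _
  have h1 : HasFDerivAt (fun y : (Fin N → ℝ) × (Fin N → ℝ) => y.1 jj) (cP jj) x :=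
    (cP jj).hasFDerivAt
  exact h1.mul h1

lemma pderivP_casG (p q : Fin N → ℝ) (a : Fin N) :
    pderivP casG (p, q) a = 2 * p a := by
  rw [pderivP, (hasFDerivAt_casG (p, q)).fderiv]
  simp [DG, cP, Pi.single_apply, Finset.sum_add_distrib, Finset.sum_ite_eq']
  ring

lemma pderivQ_casG (p q : Fin N → ℝ) (a : Fin N) :
    pderivQ casG (p, q) a = 0 := by
  rw [pderivQ, (hasFDerivAt_casG (p, q)).fderiv]
  simp [DG, cP]

lemma contract_single (c : Fin N → ℝ) (f : ℕ → ℝ) (K : ℕ) (X : Fin N → ℝ) :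
    ∑ a, (∑ i ∈ Finset.range (K+1), c a ^ (i+1) * f i) * X a
    = ∑ i ∈ Finset.range (K+1), f i * MX c X (i+1) := by
  have h : ∀ a : Fin N, (∑ i ∈ Finset.range (K+1), c a ^ (i+1) * f i) * X a
      = ∑ i ∈ Finset.range (K+1), f i * (c a ^ (i+1) * X a) := by
    intro a
    rw [Finset.sum_mul]
    exact Finset.sum_congr rfl fun i _ => by ring
  rw [Finset.sum_congr rfl fun a _ => h a, Finset.sum_comm]
  exact Finset.sum_congr rfl fun i _ => by rw [← Finset.mul_sum]; rfl

/-- Key Lemma B : the Poisson bracket of a backward integral with `casG` vanishes. -/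
lemma mainB (lam : Fin N → ℝ) (k : ℕ) (p q : Fin N → ℝ) :
    poisson (Fneg lam k) casG (p, q) = 0 := by
  set c : Fin N → ℝ := fun i => (lam i)⁻¹ with hcdef
  have hpt : ∀ a : Fin N,
      pderivQ (Fneg lam k) (p, q) a * pderivP casG (p, q) a
      - pderivP (Fneg lam k) (p, q) a * pderivQ casG (p, q) a
      = 4 * (Bf c k (p, q) a * (p a * p a)) - 4 * (Cf c k (p, q) a * (p a * q a)) := by
    intro a
    rw [pderivQ_ABC' lam k p q a, pderivP_ABC' lam k p q a,
        pderivP_casG p q a, pderivQ_casG p q a]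
    ring
  unfold poisson
  rw [Finset.sum_congr rfl fun a _ => hpt a]
  simp only [Finset.sum_sub_distrib, ← Finset.mul_sum]
  have hB := contract_single c (fun i => uM c (k-i+1) (p, q)) k (fun a => p a * p a)
  have hC := contract_single c (fun i => sM c (k-i+1) (p, q)) k (fun a => p a * q a)
  simp only [MX_pp c p q, MX_pq c p q] at hB hC
  simp only [Bf, Cf]
  rw [hB, hC]
  have hre : ∑ i ∈ Finset.range (k+1), uM c (k-i+1) (p, q) * sM c (i+1) (p, q)
      = ∑ i ∈ Finset.range (k+1), sM c (k-i+1) (p, q) * uM c (i+1) (p, q) := by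
    apply sum_reflect
    intro i hi
    show uM c (k-i+1) (p, q) * sM c (i+1) (p, q)
      = sM c (k-(k+1-1-i)+1) (p, q) * uM c ((k+1-1-i)+1) (p, q)
    rw [show k-(k+1-1-i) = i from by omega, show k+1-1-i = k-i from by omega]
    ring
  rw [hre]
  ring

lemma poisson_antisymm (f g : (Fin N → ℝ) × (Fin N → ℝ) → ℝ)
    (x : (Fin N → ℝ) × (Fin N → ℝ)) : poisson f g x = -poisson g f x := by
  unfold poisson
  rw [← Finset.sum_neg_distrib]
  exact Finset.sum_congr rfl fun a _ => by ring

end Aux4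


/-- The backward integrals of motion are in involution with respect to
the Dirac-Poisson bracket on `TS^{N-1}`. -/
theorem backward_integrals_involutive
    (N : ℕ) (hN : 2 ≤ N) (lam : Fin N → ℝ)
    (hdist : Function.Injective lam) (hnz : ∀ i, lam i ≠ 0)
    (j k : ℕ) (p q : Fin N → ℝ)
    (hsph : ∑ i, p i * p i = 1) (htan : ∑ i, p i * q i = 0) :
    dirac (Fneg lam j) (Fneg lam k) (p, q) = 0 := by
  have h1 := mainA lam j k p q
  have h2 := mainB lam j p q
  have h3 : poisson casG (Fneg lam k) (p, q) = 0 := by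
    rw [poisson_antisymm, mainB lam k p q]
    ring
  unfold dirac
  rw [h1, h2, h3]
  ring
end

section
/- Fix an integer k ≥ 0 and let (P(p,q), Q(p,q)) ∈ ℝ^N × ℝ^N denote the right-hand side of the k-th backward Neumann system, i.e. P = (1/2)·Σ_{j=0}^{k} (⟨Λ^{−j−1}p,q⟩ Λ^{−k+j−1}p + ⟨Λ^{−k+j−1}p,q⟩ Λ^{−j−1}p − 2⟨Λ^{−j−1}p,p⟩ Λ^{−k+j−1}q) and Q = −Λ^{−k−1}p + ⟨Λ^{−k−1}p,p⟩ p + (1/2)·Σ_{j=0}^{k} (2⟨Λ^{−k+j−1}q,q⟩ Λ^{−j−1}p − ⟨Λ^{−j−1}p,q⟩ Λ^{−k+j−1}q − ⟨Λ^{−k+j−1}p,q⟩ Λ^{−j−1}q). Then for every (p,q) with ⟨p,p⟩ = 1 and ⟨p,q⟩ = 0 one has ⟨p, P⟩ = 0 and ⟨P, q⟩ + ⟨p, Q⟩ = 0; that is, the backward Neumann vector field is tangent to the tangent bundle of the unit sphere TS^{N−1} = {(p,q) : ⟨p,p⟩ = 1, ⟨p,q⟩ = 0}. -/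
open Finset

/-- The `p`-component of the right-hand side of the `k`-th backward Neumann system. -/
noncomputable def bnP {N : ℕ} (lam : Fin N → ℝ) (k : ℕ)
    (p q : Fin N → ℝ) : Fin N → ℝ := fun i =>
  (1 / 2) * ∑ j ∈ Finset.range (k + 1),
    ((∑ l, ((lam l)⁻¹) ^ (j + 1) * p l * q l) * (((lam i)⁻¹) ^ (k - j + 1) * p i)
     + (∑ l, ((lam l)⁻¹) ^ (k - j + 1) * p l * q l) * (((lam i)⁻¹) ^ (j + 1) * p i)
     - 2 * (∑ l, ((lam l)⁻¹) ^ (j + 1) * p l * p l) * (((lam i)⁻¹) ^ (k - j + 1) * q i))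

/-- The `q`-component of the right-hand side of the `k`-th backward Neumann system. -/
noncomputable def bnQ {N : ℕ} (lam : Fin N → ℝ) (k : ℕ)
    (p q : Fin N → ℝ) : Fin N → ℝ := fun i =>
  -((lam i)⁻¹) ^ (k + 1) * p i + (∑ l, ((lam l)⁻¹) ^ (k + 1) * p l * p l) * p i
  + (1 / 2) * ∑ j ∈ Finset.range (k + 1),
      (2 * (∑ l, ((lam l)⁻¹) ^ (k - j + 1) * q l * q l) * (((lam i)⁻¹) ^ (j + 1) * p i)
       - (∑ l, ((lam l)⁻¹) ^ (j + 1) * p l * q l) * (((lam i)⁻¹) ^ (k - j + 1) * q i)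
       - (∑ l, ((lam l)⁻¹) ^ (k - j + 1) * p l * q l) * (((lam i)⁻¹) ^ (j + 1) * q i))

/-- auxiliary bilinear sum -/
noncomputable def bnS {N : ℕ} (lam : Fin N → ℝ) (a b : Fin N → ℝ) (m : ℕ) : ℝ :=
  ∑ l, ((lam l)⁻¹) ^ (m + 1) * a l * b l

lemma bn_piece {N : ℕ} (lam : Fin N → ℝ) (a b : Fin N → ℝ) (X : ℝ) (m : ℕ) :
    ∑ i, a i * (X * (((lam i)⁻¹) ^ (m + 1) * b i)) = X * bnS lam a b m := by
  rw [bnS, Finset.mul_sum]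
  exact Finset.sum_congr rfl fun i _ => by ring

lemma bn_dot_P {N : ℕ} (lam : Fin N → ℝ) (k : ℕ) (p q a : Fin N → ℝ) :
    ∑ i, a i * bnP lam k p q i
      = (1 / 2) * ∑ j ∈ Finset.range (k + 1),
          (bnS lam p q j * bnS lam a p (k - j) + bnS lam p q (k - j) * bnS lam a p j
            - 2 * bnS lam p p j * bnS lam a q (k - j)) := by
  unfold bnP
  rw [show ((1:ℝ)/2) * ∑ j ∈ Finset.range (k + 1),
        (bnS lam p q j * bnS lam a p (k - j) + bnS lam p q (k - j) * bnS lam a p j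
          - 2 * bnS lam p p j * bnS lam a q (k - j))
      = ∑ j ∈ Finset.range (k + 1), (1/2) *
        (bnS lam p q j * bnS lam a p (k - j) + bnS lam p q (k - j) * bnS lam a p j
          - 2 * bnS lam p p j * bnS lam a q (k - j)) from Finset.mul_sum _ _ _]
  have h1 : ∀ i, a i * ((1/2 : ℝ) * ∑ j ∈ Finset.range (k + 1),
      ((∑ l, ((lam l)⁻¹) ^ (j + 1) * p l * q l) * (((lam i)⁻¹) ^ (k - j + 1) * p i)
       + (∑ l, ((lam l)⁻¹) ^ (k - j + 1) * p l * q l) * (((lam i)⁻¹) ^ (j + 1) * p i)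
       - 2 * (∑ l, ((lam l)⁻¹) ^ (j + 1) * p l * p l) * (((lam i)⁻¹) ^ (k - j + 1) * q i)))
      = ∑ j ∈ Finset.range (k + 1), (1/2 : ℝ) *
        (a i * ((∑ l, ((lam l)⁻¹) ^ (j + 1) * p l * q l) * (((lam i)⁻¹) ^ (k - j + 1) * p i))
         + a i * ((∑ l, ((lam l)⁻¹) ^ (k - j + 1) * p l * q l) * (((lam i)⁻¹) ^ (j + 1) * p i))
         - a i * (2 * (∑ l, ((lam l)⁻¹) ^ (j + 1) * p l * p l) * (((lam i)⁻¹) ^ (k - j + 1) * q i))) := by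
    intro i
    rw [Finset.mul_sum, Finset.mul_sum]
    exact Finset.sum_congr rfl fun j _ => by ring
  simp only [h1]
  rw [Finset.sum_comm]
  refine Finset.sum_congr rfl fun j _ => ?_
  rw [← Finset.mul_sum]
  congr 1
  rw [Finset.sum_sub_distrib, Finset.sum_add_distrib]
  rw [bn_piece lam a p (∑ l, ((lam l)⁻¹) ^ (j + 1) * p l * q l) (k - j),
      bn_piece lam a p (∑ l, ((lam l)⁻¹) ^ (k - j + 1) * p l * q l) j]
  have h3 : ∑ i, a i * (2 * (∑ l, ((lam l)⁻¹) ^ (j + 1) * p l * p l) * (((lam i)⁻¹) ^ (k - j + 1) * q i))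
      = (2 * (∑ l, ((lam l)⁻¹) ^ (j + 1) * p l * p l)) * bnS lam a q (k - j) :=
    bn_piece lam a q _ (k - j)
  rw [h3]
  simp only [bnS]
  try ring

lemma bnS_comm {N : ℕ} (lam : Fin N → ℝ) (a b : Fin N → ℝ) (m : ℕ) :
    bnS lam a b m = bnS lam b a m :=
  Finset.sum_congr rfl fun i _ => by ring

lemma bn_dot_Q {N : ℕ} (lam : Fin N → ℝ) (k : ℕ) (p q : Fin N → ℝ) :
    ∑ i, p i * bnQ lam k p q i
      = -(bnS lam p p k) + bnS lam p p k * (∑ i, p i * p i)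
        + (1 / 2) * ∑ j ∈ Finset.range (k + 1),
            (2 * bnS lam q q (k - j) * bnS lam p p j
             - bnS lam p q j * bnS lam p q (k - j)
             - bnS lam p q (k - j) * bnS lam p q j) := by
  unfold bnQ
  simp only [mul_add, Finset.sum_add_distrib]
  congr 1
  · congr 1
    · rw [bnS, ← Finset.sum_neg_distrib]
      exact Finset.sum_congr rfl fun i _ => by ring
    · simp only [bnS]
      rw [Finset.mul_sum]
      exact Finset.sum_congr rfl fun i _ => by ring
  · rw [show ((1:ℝ)/2) * ∑ j ∈ Finset.range (k + 1),
        (2 * bnS lam q q (k - j) * bnS lam p p j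
         - bnS lam p q j * bnS lam p q (k - j)
         - bnS lam p q (k - j) * bnS lam p q j)
      = ∑ j ∈ Finset.range (k + 1), (1/2) *
        (2 * bnS lam q q (k - j) * bnS lam p p j
         - bnS lam p q j * bnS lam p q (k - j)
         - bnS lam p q (k - j) * bnS lam p q j) from Finset.mul_sum _ _ _]
    have h1 : ∀ i, p i * ((1/2 : ℝ) * ∑ j ∈ Finset.range (k + 1),
        (2 * (∑ l, ((lam l)⁻¹) ^ (k - j + 1) * q l * q l) * (((lam i)⁻¹) ^ (j + 1) * p i)
         - (∑ l, ((lam l)⁻¹) ^ (j + 1) * p l * q l) * (((lam i)⁻¹) ^ (k - j + 1) * q i)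
         - (∑ l, ((lam l)⁻¹) ^ (k - j + 1) * p l * q l) * (((lam i)⁻¹) ^ (j + 1) * q i)))
        = ∑ j ∈ Finset.range (k + 1), (1/2 : ℝ) *
          (p i * (2 * (∑ l, ((lam l)⁻¹) ^ (k - j + 1) * q l * q l) * (((lam i)⁻¹) ^ (j + 1) * p i))
           - p i * ((∑ l, ((lam l)⁻¹) ^ (j + 1) * p l * q l) * (((lam i)⁻¹) ^ (k - j + 1) * q i))
           - p i * ((∑ l, ((lam l)⁻¹) ^ (k - j + 1) * p l * q l) * (((lam i)⁻¹) ^ (j + 1) * q i))) := by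
      intro i
      rw [Finset.mul_sum, Finset.mul_sum]
      exact Finset.sum_congr rfl fun j _ => by ring
    simp only [h1]
    rw [Finset.sum_comm]
    refine Finset.sum_congr rfl fun j _ => ?_
    rw [← Finset.mul_sum]
    congr 1
    rw [Finset.sum_sub_distrib, Finset.sum_sub_distrib]
    have h3 : ∑ i, p i * (2 * (∑ l, ((lam l)⁻¹) ^ (k - j + 1) * q l * q l) * (((lam i)⁻¹) ^ (j + 1) * p i))
        = (2 * (∑ l, ((lam l)⁻¹) ^ (k - j + 1) * q l * q l)) * bnS lam p p j :=
      bn_piece lam p p _ j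
    rw [h3,
        bn_piece lam p q (∑ l, ((lam l)⁻¹) ^ (j + 1) * p l * q l) (k - j),
        bn_piece lam p q (∑ l, ((lam l)⁻¹) ^ (k - j + 1) * p l * q l) j]
    simp only [bnS]
    try ring

/-- The backward Neumann vector field is tangent to the tangent bundle
of the unit sphere `TS^{N-1} = {(p,q) : ⟨p,p⟩ = 1, ⟨p,q⟩ = 0}`:
`⟨p, P⟩ = 0` and `⟨P, q⟩ + ⟨p, Q⟩ = 0`. -/
theorem backward_neumann_tangent
    (N : ℕ) (hN : 2 ≤ N) (lam : Fin N → ℝ)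
    (hdist : Function.Injective lam) (hnz : ∀ i, lam i ≠ 0)
    (k : ℕ) (p q : Fin N → ℝ)
    (hsph : ∑ i, p i * p i = 1) (htan : ∑ i, p i * q i = 0) :
    (∑ i, p i * bnP lam k p q i = 0) ∧
    (∑ i, bnP lam k p q i * q i) + (∑ i, p i * bnQ lam k p q i) = 0 := by
  constructor
  · rw [bn_dot_P lam k p q p]
    set f : ℕ → ℝ := fun j => bnS lam p q j * bnS lam p p (k - j)
      + bnS lam p q (k - j) * bnS lam p p j
      - 2 * bnS lam p p j * bnS lam p q (k - j) with hf
    have hrefl := Finset.sum_range_reflect f (k + 1)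
    simp only [Nat.add_sub_cancel] at hrefl
    have hcomb : (∑ j ∈ Finset.range (k + 1), f j) + ∑ j ∈ Finset.range (k + 1), f j = 0 := by
      nth_rewrite 1 [← hrefl]
      rw [← Finset.sum_add_distrib]
      refine Finset.sum_eq_zero fun j hj => ?_
      have hj' : j ≤ k := Nat.lt_succ_iff.mp (Finset.mem_range.mp hj)
      simp only [hf]
      rw [Nat.sub_sub_self hj']
      ring
    linarith
  · have hQP : ∑ i, bnP lam k p q i * q i = ∑ i, q i * bnP lam k p q i :=
      Finset.sum_congr rfl fun i _ => mul_comm _ _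
    rw [hQP, bn_dot_P lam k p q q, bn_dot_Q lam k p q, hsph, mul_one]
    simp only [bnS_comm lam q p]
    have hsum : ∑ j ∈ Finset.range (k + 1),
        ((bnS lam p q j * bnS lam p q (k - j) + bnS lam p q (k - j) * bnS lam p q j
          - 2 * bnS lam p p j * bnS lam q q (k - j))
         + (2 * bnS lam q q (k - j) * bnS lam p p j
            - bnS lam p q j * bnS lam p q (k - j)
            - bnS lam p q (k - j) * bnS lam p q j)) = 0 :=
      Finset.sum_eq_zero fun j _ => by ring
    rw [Finset.sum_add_distrib] at hsum
    linarith
end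

section
/- Fix an integer k ≥ 0 and let p, q : ℝ → ℝ^N be smooth solutions of the k-th backward Neumann system such that ⟨p(t),p(t)⟩ = 1 and ⟨p(t),q(t)⟩ = 0 for all t. Then for all t: d/dt ⟨Λp(t),p(t)⟩ = 2⟨Λ^{−k−1}p(t),q(t)⟩ and d/dt ⟨q(t),q(t)⟩ = −2⟨Λ^{−k−1}p(t),q(t)⟩. In particular ⟨Λp,p⟩ + ⟨q,q⟩ is constant along the flow. -/
open Finset

private lemma reflect_eq (n : ℕ) (f g : ℕ → ℝ) (h : ∀ j < n, f j = g (n - 1 - j)) :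
    ∑ j ∈ Finset.range n, f j = ∑ j ∈ Finset.range n, g j := by
  rw [← Finset.sum_range_reflect g n]
  exact Finset.sum_congr rfl fun j hj => h j (Finset.mem_range.mp hj)

private lemma key1 (k : ℕ) (D E : ℕ → ℝ) (hD0 : D 0 = 1) (hE0 : E 0 = 0) :
    ∑ j ∈ Finset.range (k + 1),
      (E (j + 1) * D (k - j) + E (k - j + 1) * D j - 2 * (D (j + 1) * E (k - j)))
      = 2 * E (k + 1) := by
  have h2 : ∑ j ∈ Finset.range (k + 1), E (k - j + 1) * D j
      = ∑ j ∈ Finset.range (k + 1), E (j + 1) * D (k - j) := by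
    refine reflect_eq (k + 1) _ _ fun j hj => ?_
    show E (k - j + 1) * D j = E ((k + 1 - 1 - j) + 1) * D (k - (k + 1 - 1 - j))
    rw [show k + 1 - 1 - j = k - j from by omega, show k - (k - j) = j from by omega]
  have h3 : ∑ j ∈ Finset.range (k + 1), D (j + 1) * E (k - j)
      = ∑ j ∈ Finset.range (k + 1), E j * D (k + 1 - j) := by
    refine reflect_eq (k + 1) _ _ fun j hj => ?_
    show D (j + 1) * E (k - j) = E (k + 1 - 1 - j) * D (k + 1 - (k + 1 - 1 - j))
    rw [show k + 1 - 1 - j = k - j from by omega, show k + 1 - (k - j) = j + 1 from by omega]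
    ring
  have htel : ∑ j ∈ Finset.range (k + 1),
      (E (j + 1) * D (k + 1 - (j + 1)) - E j * D (k + 1 - j))
      = E (k + 1) * D (k + 1 - (k + 1)) - E 0 * D (k + 1 - 0) :=
    Finset.sum_range_sub (fun j => E j * D (k + 1 - j)) (k + 1)
  have hconv : ∑ j ∈ Finset.range (k + 1),
      (E (j + 1) * D (k + 1 - (j + 1)) - E j * D (k + 1 - j))
      = ∑ j ∈ Finset.range (k + 1), (E (j + 1) * D (k - j) - E j * D (k + 1 - j)) :=
    Finset.sum_congr rfl fun j _ => by rw [show k + 1 - (j + 1) = k - j from by omega]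
  rw [hconv, Finset.sum_sub_distrib, Nat.sub_self, Nat.sub_zero, hD0, hE0] at htel
  rw [Finset.sum_sub_distrib, Finset.sum_add_distrib, h2, ← Finset.mul_sum, h3]
  linarith [htel]

private lemma key2 (k : ℕ) (E F : ℕ → ℝ) :
    ∑ j ∈ Finset.range (k + 1),
      (2 * (F (k - j + 1) * E (j + 1)) - E (j + 1) * F (k - j + 1)
        - E (k - j + 1) * F (j + 1)) = 0 := by
  have h : ∑ j ∈ Finset.range (k + 1), E (k - j + 1) * F (j + 1)
      = ∑ j ∈ Finset.range (k + 1), E (j + 1) * F (k - j + 1) := by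
    refine reflect_eq (k + 1) _ _ fun j hj => ?_
    show E (k - j + 1) * F (j + 1) = E ((k + 1 - 1 - j) + 1) * F (k - (k + 1 - 1 - j) + 1)
    rw [show k + 1 - 1 - j = k - j from by omega, show k - (k - j) = j from by omega]
  calc ∑ j ∈ Finset.range (k + 1),
      (2 * (F (k - j + 1) * E (j + 1)) - E (j + 1) * F (k - j + 1)
        - E (k - j + 1) * F (j + 1))
      = ∑ j ∈ Finset.range (k + 1), E (j + 1) * F (k - j + 1)
        - ∑ j ∈ Finset.range (k + 1), E (k - j + 1) * F (j + 1) := by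
        rw [← Finset.sum_sub_distrib]
        exact Finset.sum_congr rfl fun j _ => by ring
    _ = 0 := by rw [h]; ring

private lemma cancel_id (A B C c P Q L : ℝ) (m n : ℕ) (h : L * c = 1) :
    (L * P) * (A * (c ^ m * c * P) + B * (c ^ n * c * P) - 2 * C * (c ^ m * c * Q))
      = A * (c ^ m * P * P) + B * (c ^ n * P * P) - 2 * (C * (c ^ m * P * Q)) := by
  linear_combination (A * c ^ m * P * P + B * c ^ n * P * P - 2 * C * c ^ m * P * Q) * h

private lemma alg1 {N : ℕ} (lam : Fin N → ℝ) (hnz : ∀ i, lam i ≠ 0) (k : ℕ)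
    (P Q : Fin N → ℝ) (hsph : ∑ i, P i * P i = 1) (htan : ∑ i, P i * Q i = 0) :
    ∑ i, ((lam i * bnP lam k P Q i) * P i + (lam i * P i) * bnP lam k P Q i)
      = 2 * ∑ i, ((lam i)⁻¹) ^ (k + 1) * P i * Q i := by
  have step : ∀ i, (lam i * bnP lam k P Q i) * P i + (lam i * P i) * bnP lam k P Q i
      = ∑ j ∈ Finset.range (k + 1),
          ((∑ l, ((lam l)⁻¹) ^ (j + 1) * P l * Q l) * (((lam i)⁻¹) ^ (k - j) * P i * P i)
           + (∑ l, ((lam l)⁻¹) ^ (k - j + 1) * P l * Q l) * (((lam i)⁻¹) ^ j * P i * P i)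
           - 2 * ((∑ l, ((lam l)⁻¹) ^ (j + 1) * P l * P l)
              * (((lam i)⁻¹) ^ (k - j) * P i * Q i))) := by
    intro i
    have hc : lam i * (lam i)⁻¹ = 1 := mul_inv_cancel₀ (hnz i)
    have hsum : (lam i * P i) * ∑ j ∈ Finset.range (k + 1),
        ((∑ l, ((lam l)⁻¹) ^ (j + 1) * P l * Q l) * (((lam i)⁻¹) ^ (k - j + 1) * P i)
         + (∑ l, ((lam l)⁻¹) ^ (k - j + 1) * P l * Q l) * (((lam i)⁻¹) ^ (j + 1) * P i)
         - 2 * (∑ l, ((lam l)⁻¹) ^ (j + 1) * P l * P l) * (((lam i)⁻¹) ^ (k - j + 1) * Q i))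
        = ∑ j ∈ Finset.range (k + 1),
          ((∑ l, ((lam l)⁻¹) ^ (j + 1) * P l * Q l) * (((lam i)⁻¹) ^ (k - j) * P i * P i)
           + (∑ l, ((lam l)⁻¹) ^ (k - j + 1) * P l * Q l) * (((lam i)⁻¹) ^ j * P i * P i)
           - 2 * ((∑ l, ((lam l)⁻¹) ^ (j + 1) * P l * P l)
              * (((lam i)⁻¹) ^ (k - j) * P i * Q i))) := by
      rw [Finset.mul_sum]
      refine Finset.sum_congr rfl fun j _ => ?_
      simp only [pow_succ]
      exact cancel_id _ _ _ _ _ _ _ _ _ hc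
    simp only [bnP]
    linear_combination hsum
  calc ∑ i, ((lam i * bnP lam k P Q i) * P i + (lam i * P i) * bnP lam k P Q i)
      = ∑ i, ∑ j ∈ Finset.range (k + 1),
          ((∑ l, ((lam l)⁻¹) ^ (j + 1) * P l * Q l) * (((lam i)⁻¹) ^ (k - j) * P i * P i)
           + (∑ l, ((lam l)⁻¹) ^ (k - j + 1) * P l * Q l) * (((lam i)⁻¹) ^ j * P i * P i)
           - 2 * ((∑ l, ((lam l)⁻¹) ^ (j + 1) * P l * P l)
              * (((lam i)⁻¹) ^ (k - j) * P i * Q i))) :=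
        Finset.sum_congr rfl fun i _ => step i
    _ = ∑ j ∈ Finset.range (k + 1), ∑ i,
          ((∑ l, ((lam l)⁻¹) ^ (j + 1) * P l * Q l) * (((lam i)⁻¹) ^ (k - j) * P i * P i)
           + (∑ l, ((lam l)⁻¹) ^ (k - j + 1) * P l * Q l) * (((lam i)⁻¹) ^ j * P i * P i)
           - 2 * ((∑ l, ((lam l)⁻¹) ^ (j + 1) * P l * P l)
              * (((lam i)⁻¹) ^ (k - j) * P i * Q i))) := Finset.sum_comm
    _ = ∑ j ∈ Finset.range (k + 1),
          ((∑ l, ((lam l)⁻¹) ^ (j + 1) * P l * Q l) * (∑ i, ((lam i)⁻¹) ^ (k - j) * P i * P i)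
           + (∑ l, ((lam l)⁻¹) ^ (k - j + 1) * P l * Q l) * (∑ i, ((lam i)⁻¹) ^ j * P i * P i)
           - 2 * ((∑ l, ((lam l)⁻¹) ^ (j + 1) * P l * P l)
              * (∑ i, ((lam i)⁻¹) ^ (k - j) * P i * Q i))) := by
        refine Finset.sum_congr rfl fun j _ => ?_
        simp only [Finset.sum_sub_distrib, Finset.sum_add_distrib, ← Finset.mul_sum]
    _ = 2 * ∑ i, ((lam i)⁻¹) ^ (k + 1) * P i * Q i := by
        exact key1 k (fun m => ∑ i, ((lam i)⁻¹) ^ m * P i * P i)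
          (fun m => ∑ i, ((lam i)⁻¹) ^ m * P i * Q i)
          (by simpa using hsph) (by simpa using htan)

private lemma alg2 {N : ℕ} (lam : Fin N → ℝ) (k : ℕ) (P Q : Fin N → ℝ)
    (htan : ∑ i, P i * Q i = 0) :
    ∑ i, (bnQ lam k P Q i * Q i + Q i * bnQ lam k P Q i)
      = -2 * ∑ i, ((lam i)⁻¹) ^ (k + 1) * P i * Q i := by
  have step : ∀ i, bnQ lam k P Q i * Q i + Q i * bnQ lam k P Q i
      = (-2 * (((lam i)⁻¹) ^ (k + 1) * P i * Q i)
         + 2 * ((∑ l, ((lam l)⁻¹) ^ (k + 1) * P l * P l) * (P i * Q i)))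
        + ∑ j ∈ Finset.range (k + 1),
            (2 * ((∑ l, ((lam l)⁻¹) ^ (k - j + 1) * Q l * Q l)
                * (((lam i)⁻¹) ^ (j + 1) * P i * Q i))
             - (∑ l, ((lam l)⁻¹) ^ (j + 1) * P l * Q l)
                * (((lam i)⁻¹) ^ (k - j + 1) * Q i * Q i)
             - (∑ l, ((lam l)⁻¹) ^ (k - j + 1) * P l * Q l)
                * (((lam i)⁻¹) ^ (j + 1) * Q i * Q i)) := by
    intro i
    have hsum : Q i * ∑ j ∈ Finset.range (k + 1),
        (2 * (∑ l, ((lam l)⁻¹) ^ (k - j + 1) * Q l * Q l) * (((lam i)⁻¹) ^ (j + 1) * P i)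
         - (∑ l, ((lam l)⁻¹) ^ (j + 1) * P l * Q l) * (((lam i)⁻¹) ^ (k - j + 1) * Q i)
         - (∑ l, ((lam l)⁻¹) ^ (k - j + 1) * P l * Q l) * (((lam i)⁻¹) ^ (j + 1) * Q i))
        = ∑ j ∈ Finset.range (k + 1),
            (2 * ((∑ l, ((lam l)⁻¹) ^ (k - j + 1) * Q l * Q l)
                * (((lam i)⁻¹) ^ (j + 1) * P i * Q i))
             - (∑ l, ((lam l)⁻¹) ^ (j + 1) * P l * Q l)
                * (((lam i)⁻¹) ^ (k - j + 1) * Q i * Q i)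
             - (∑ l, ((lam l)⁻¹) ^ (k - j + 1) * P l * Q l)
                * (((lam i)⁻¹) ^ (j + 1) * Q i * Q i)) := by
      rw [Finset.mul_sum]
      exact Finset.sum_congr rfl fun j _ => by ring
    simp only [bnQ]
    linear_combination hsum
  calc ∑ i, (bnQ lam k P Q i * Q i + Q i * bnQ lam k P Q i)
      = ∑ i, ((-2 * (((lam i)⁻¹) ^ (k + 1) * P i * Q i)
         + 2 * ((∑ l, ((lam l)⁻¹) ^ (k + 1) * P l * P l) * (P i * Q i)))
        + ∑ j ∈ Finset.range (k + 1),
            (2 * ((∑ l, ((lam l)⁻¹) ^ (k - j + 1) * Q l * Q l)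
                * (((lam i)⁻¹) ^ (j + 1) * P i * Q i))
             - (∑ l, ((lam l)⁻¹) ^ (j + 1) * P l * Q l)
                * (((lam i)⁻¹) ^ (k - j + 1) * Q i * Q i)
             - (∑ l, ((lam l)⁻¹) ^ (k - j + 1) * P l * Q l)
                * (((lam i)⁻¹) ^ (j + 1) * Q i * Q i))) :=
        Finset.sum_congr rfl fun i _ => step i
    _ = -2 * ∑ i, ((lam i)⁻¹) ^ (k + 1) * P i * Q i := by
        rw [Finset.sum_add_distrib]
        have h1 : ∑ i, (-2 * (((lam i)⁻¹) ^ (k + 1) * P i * Q i)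
            + 2 * ((∑ l, ((lam l)⁻¹) ^ (k + 1) * P l * P l) * (P i * Q i)))
            = -2 * ∑ i, ((lam i)⁻¹) ^ (k + 1) * P i * Q i := by
          simp only [Finset.sum_add_distrib, ← Finset.mul_sum]
          rw [htan]; ring
        have h2 : ∑ i, ∑ j ∈ Finset.range (k + 1),
            (2 * ((∑ l, ((lam l)⁻¹) ^ (k - j + 1) * Q l * Q l)
                * (((lam i)⁻¹) ^ (j + 1) * P i * Q i))
             - (∑ l, ((lam l)⁻¹) ^ (j + 1) * P l * Q l)
                * (((lam i)⁻¹) ^ (k - j + 1) * Q i * Q i)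
             - (∑ l, ((lam l)⁻¹) ^ (k - j + 1) * P l * Q l)
                * (((lam i)⁻¹) ^ (j + 1) * Q i * Q i)) = 0 := by
          rw [Finset.sum_comm]
          calc ∑ j ∈ Finset.range (k + 1), ∑ i,
              (2 * ((∑ l, ((lam l)⁻¹) ^ (k - j + 1) * Q l * Q l)
                  * (((lam i)⁻¹) ^ (j + 1) * P i * Q i))
               - (∑ l, ((lam l)⁻¹) ^ (j + 1) * P l * Q l)
                  * (((lam i)⁻¹) ^ (k - j + 1) * Q i * Q i)
               - (∑ l, ((lam l)⁻¹) ^ (k - j + 1) * P l * Q l)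
                  * (((lam i)⁻¹) ^ (j + 1) * Q i * Q i))
              = ∑ j ∈ Finset.range (k + 1),
              (2 * ((∑ l, ((lam l)⁻¹) ^ (k - j + 1) * Q l * Q l)
                  * (∑ i, ((lam i)⁻¹) ^ (j + 1) * P i * Q i))
               - (∑ l, ((lam l)⁻¹) ^ (j + 1) * P l * Q l)
                  * (∑ i, ((lam i)⁻¹) ^ (k - j + 1) * Q i * Q i)
               - (∑ l, ((lam l)⁻¹) ^ (k - j + 1) * P l * Q l)
                  * (∑ i, ((lam i)⁻¹) ^ (j + 1) * Q i * Q i)) := by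
                refine Finset.sum_congr rfl fun j _ => ?_
                simp only [Finset.sum_sub_distrib, ← Finset.mul_sum]
            _ = 0 := key2 k (fun m => ∑ i, ((lam i)⁻¹) ^ m * P i * Q i)
                (fun m => ∑ i, ((lam i)⁻¹) ^ m * Q i * Q i)
        rw [h1, h2, add_zero]

/-- Along the `k`-th backward Neumann flow on `TS^{N-1}` one has
`d/dt ⟨Λp,p⟩ = 2⟨Λ^{-k-1}p,q⟩` and `d/dt ⟨q,q⟩ = -2⟨Λ^{-k-1}p,q⟩`; in particular
`⟨Λp,p⟩ + ⟨q,q⟩` is constant along the flow. -/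
theorem backward_neumann_flow_derivatives
    (N : ℕ) (hN : 2 ≤ N) (lam : Fin N → ℝ)
    (hdist : Function.Injective lam) (hnz : ∀ i, lam i ≠ 0)
    (k : ℕ) (p q : ℝ → Fin N → ℝ)
    (hp : ∀ i, ContDiff ℝ (⊤ : ℕ∞) (fun t => p t i))
    (hq : ∀ i, ContDiff ℝ (⊤ : ℕ∞) (fun t => q t i))
    (hpt : ∀ t i, deriv (fun s => p s i) t = bnP lam k (p t) (q t) i)
    (hqt : ∀ t i, deriv (fun s => q s i) t = bnQ lam k (p t) (q t) i)
    (hsph : ∀ t, ∑ i, p t i * p t i = 1)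
    (htan : ∀ t, ∑ i, p t i * q t i = 0) :
    (∀ t, deriv (fun s => ∑ i, lam i * p s i * p s i) t
        = 2 * ∑ i, ((lam i)⁻¹) ^ (k + 1) * p t i * q t i) ∧
    (∀ t, deriv (fun s => ∑ i, q s i * q s i) t
        = -2 * ∑ i, ((lam i)⁻¹) ^ (k + 1) * p t i * q t i) ∧
    (∀ t, (∑ i, lam i * p t i * p t i) + (∑ i, q t i * q t i)
        = (∑ i, lam i * p 0 i * p 0 i) + (∑ i, q 0 i * q 0 i)) := by
  have hdp : ∀ i t, HasDerivAt (fun s => p s i) (bnP lam k (p t) (q t) i) t := by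
    intro i t
    have h := (((hp i).differentiable (by simp)) t).hasDerivAt
    rwa [hpt t i] at h
  have hdq : ∀ i t, HasDerivAt (fun s => q s i) (bnQ lam k (p t) (q t) i) t := by
    intro i t
    have h := (((hq i).differentiable (by simp)) t).hasDerivAt
    rwa [hqt t i] at h
  have hPhas : ∀ t, HasDerivAt (fun s => ∑ i, lam i * p s i * p s i)
      (∑ i, ((lam i * bnP lam k (p t) (q t) i) * p t i
        + (lam i * p t i) * bnP lam k (p t) (q t) i)) t := fun t =>
    HasDerivAt.fun_sum fun i _ => ((hdp i t).const_mul (lam i)).mul (hdp i t)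
  have hQhas : ∀ t, HasDerivAt (fun s => ∑ i, q s i * q s i)
      (∑ i, (bnQ lam k (p t) (q t) i * q t i + q t i * bnQ lam k (p t) (q t) i)) t :=
    fun t => HasDerivAt.fun_sum fun i _ => (hdq i t).mul (hdq i t)
  have c1 : ∀ t, deriv (fun s => ∑ i, lam i * p s i * p s i) t
      = 2 * ∑ i, ((lam i)⁻¹) ^ (k + 1) * p t i * q t i := fun t =>
    (hPhas t).deriv.trans (alg1 lam hnz k (p t) (q t) (hsph t) (htan t))
  have c2 : ∀ t, deriv (fun s => ∑ i, q s i * q s i) t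
      = -2 * ∑ i, ((lam i)⁻¹) ^ (k + 1) * p t i * q t i := fun t =>
    (hQhas t).deriv.trans (alg2 lam k (p t) (q t) (htan t))
  refine ⟨c1, c2, ?_⟩
  have hghas : ∀ t, HasDerivAt
      (fun s => (∑ i, lam i * p s i * p s i) + (∑ i, q s i * q s i))
      ((∑ i, ((lam i * bnP lam k (p t) (q t) i) * p t i
        + (lam i * p t i) * bnP lam k (p t) (q t) i))
       + ∑ i, (bnQ lam k (p t) (q t) i * q t i + q t i * bnQ lam k (p t) (q t) i)) t :=
    fun t => (hPhas t).add (hQhas t)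
  have hg0 : ∀ t, deriv
      (fun s => (∑ i, lam i * p s i * p s i) + (∑ i, q s i * q s i)) t = 0 := by
    intro t
    rw [(hghas t).deriv, alg1 lam hnz k (p t) (q t) (hsph t) (htan t),
      alg2 lam k (p t) (q t) (htan t)]
    ring
  have hdiff : Differentiable ℝ
      (fun s => (∑ i, lam i * p s i * p s i) + (∑ i, q s i * q s i)) :=
    fun t => (hghas t).differentiableAt
  exact fun t => is_const_of_deriv_eq_zero hdiff hg0 t 0
end

section
/- (Proposition 2.) Fix an integer k ≥ 0 and let p, q : ℝ × ℝ → ℝ^N be smooth functions of (x,t) such that for each fixed t, (p,q) satisfies in x the Neumann system p_x = q, q_x = −Λp + (⟨Λp,p⟩ − ⟨q,q⟩)p, for each fixed x it satisfies in t the k-th backward Neumann system, and ⟨p,p⟩ = 1, ⟨p,q⟩ = 0 everywhere. Set u = ⟨q,q⟩ − ⟨Λp,p⟩ and v_j = ⟨Λ^{−j}p,p⟩ for j = 1,…,k+1. Then u is a finite parametric solution of the (k+1)-th negative-order KdV equation: ∂_t u + 2 ∂_x v_{k+1} = 0, ∂_x³ v_1 + 4u ∂_x v_1 + 2(∂_x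 u) v_1 = 0, and ∂_x³ v_{j+1} + 4u ∂_x v_{j+1} + 2(∂_x u) v_{j+1} + 4 ∂_x v_j = 0 for 1 ≤ j ≤ k. -/
open Finset

noncomputable def S2 {N : ℕ} (c w z : Fin N → ℝ) : ℝ := ∑ i, c i * w i * z i

noncomputable def cinv {N : ℕ} (lam : Fin N → ℝ) (j : ℕ) : Fin N → ℝ := fun i => ((lam i)⁻¹) ^ j

lemma hasDerivAt_S2 {N : ℕ} (c : Fin N → ℝ) {w z : ℝ → Fin N → ℝ} {w' z' : Fin N → ℝ} {x : ℝ}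
    (hw : ∀ i, HasDerivAt (fun y => w y i) (w' i) x)
    (hz : ∀ i, HasDerivAt (fun y => z y i) (z' i) x) :
    HasDerivAt (fun y => S2 c (w y) (z y)) (∑ i, c i * (w' i * z x i + w x i * z' i)) x := by
  have h := HasDerivAt.fun_sum (u := Finset.univ)
    (fun i _ => (((hw i).const_mul (c i)).fun_mul (hz i)))
  simp only [S2]
  exact h.congr_deriv (Finset.sum_congr rfl fun i _ => by ring)

lemma HasDerivAt.congr_d {f : ℝ → ℝ} {a b x : ℝ} (h : HasDerivAt f a x) (e : a = b) :
    HasDerivAt f b x := e ▸ h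

lemma sum_half_swap {N n : ℕ} (a : Fin N → ℝ) (F : Fin N → ℕ → ℝ) :
    ∑ i, a i * ((1/2) * ∑ j ∈ Finset.range n, F i j)
      = (1/2) * ∑ j ∈ Finset.range n, ∑ i, a i * F i j := by
  have : ∀ i : Fin N, a i * ((1/2) * ∑ j ∈ Finset.range n, F i j)
      = ∑ j ∈ Finset.range n, (1/2) * (a i * F i j) := by
    intro i; rw [Finset.mul_sum, Finset.mul_sum]; exact Finset.sum_congr rfl fun j _ => by ring
  rw [Finset.sum_congr rfl fun i _ => this i, Finset.sum_comm, Finset.mul_sum]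
  exact Finset.sum_congr rfl fun j _ => by rw [Finset.mul_sum]

lemma cinv_cancel {N : ℕ} {lam : Fin N → ℝ} (hnz : ∀ i, lam i ≠ 0) (i : Fin N) (m : ℕ) :
    ((lam i)⁻¹) ^ (m+1) * lam i = ((lam i)⁻¹) ^ m := by
  rw [pow_succ, mul_assoc, inv_mul_cancel₀ (hnz i), mul_one]

lemma hpull {N : ℕ} (lam : Fin N → ℝ) (hnz : ∀ i, lam i ≠ 0) (p : Fin N → ℝ)
    (A : ℝ) (m : ℕ) (z : Fin N → ℝ) :
    ∑ i, lam i * p i * (A * (((lam i)⁻¹) ^ (m+1) * z i)) = A * S2 (cinv lam m) p z := by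
  rw [S2, Finset.mul_sum]
  exact Finset.sum_congr rfl fun i _ => by
    simp only [cinv]
    linear_combination (p i * A * z i) * cinv_cancel hnz i m

lemma hpull2 {N : ℕ} (lam : Fin N → ℝ) (a : Fin N → ℝ)
    (A : ℝ) (m : ℕ) (z : Fin N → ℝ) :
    ∑ i, a i * (A * (((lam i)⁻¹) ^ m * z i)) = A * S2 (cinv lam m) z a := by
  rw [S2, Finset.mul_sum]
  exact Finset.sum_congr rfl fun i _ => by simp only [cinv]; ring

lemma key1_s12 {N : ℕ} (lam : Fin N → ℝ) (hnz : ∀ i, lam i ≠ 0) (k : ℕ) (p q : Fin N → ℝ) :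
    S2 lam p (bnP lam k p q)
      = S2 (cinv lam (k+1)) p q * S2 (cinv lam 0) p p
        - S2 (cinv lam 0) p q * S2 (cinv lam (k+1)) p p := by
  set R : ℕ → ℝ := fun m => S2 (cinv lam m) p q with hR
  set P : ℕ → ℝ := fun m => S2 (cinv lam m) p p with hP
  have hRS : ∀ m, (∑ l, ((lam l)⁻¹) ^ m * p l * q l) = R m := fun m => by
    simp [hR, S2, cinv]
  have hPS : ∀ m, (∑ l, ((lam l)⁻¹) ^ m * p l * p l) = P m := fun m => by
    simp [hP, S2, cinv]
  have step1 : S2 lam p (bnP lam k p q)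
      = (1/2) * ∑ j ∈ Finset.range (k+1),
          (R (j+1) * P (k-j) + R (k-j+1) * P j - 2 * P (j+1) * R (k-j)) := by
    rw [S2]
    show ∑ i, lam i * p i * (bnP lam k p q i) = _
    simp only [bnP]
    rw [sum_half_swap]
    congr 1
    refine Finset.sum_congr rfl fun j hj => ?_
    simp only [mul_add, mul_sub, Finset.sum_add_distrib, Finset.sum_sub_distrib]
    rw [hpull lam hnz p _ (k-j) p, hpull lam hnz p _ j p, hpull lam hnz p _ (k-j) q,
      hRS, hRS, hPS]
  rw [step1]
  have refl1 : ∑ j ∈ Finset.range (k+1), R (k-j+1) * P j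
      = ∑ j ∈ Finset.range (k+1), R (j+1) * P (k-j) := by
    rw [← Finset.sum_range_reflect]
    refine Finset.sum_congr rfl fun j hj => ?_
    have hj' : j ≤ k := Nat.lt_succ_iff.mp (Finset.mem_range.mp hj)
    simp only [Nat.add_sub_cancel]
    rw [Nat.sub_sub_self hj']
  have refl2 : ∑ j ∈ Finset.range (k+1), 2 * P (j+1) * R (k-j)
      = ∑ j ∈ Finset.range (k+1), 2 * P (k-j+1) * R j := by
    rw [← Finset.sum_range_reflect]
    refine Finset.sum_congr rfl fun j hj => ?_
    have hj' : j ≤ k := Nat.lt_succ_iff.mp (Finset.mem_range.mp hj)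
    simp only [Nat.add_sub_cancel]
    rw [Nat.sub_sub_self hj']
  rw [Finset.sum_sub_distrib, Finset.sum_add_distrib, refl1, refl2]
  have tele : ∑ j ∈ Finset.range (k+1),
      ((fun m => R m * P (k+1-m)) (j+1) - (fun m => R m * P (k+1-m)) j)
      = R (k+1) * P (k+1-(k+1)) - R 0 * P (k+1-0) :=
    Finset.sum_range_sub (fun m => R m * P (k+1-m)) (k+1)
  simp only [Nat.sub_self, Nat.sub_zero] at tele
  have expand : ∑ j ∈ Finset.range (k+1),
      ((fun m => R m * P (k+1-m)) (j+1) - (fun m => R m * P (k+1-m)) j)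
      = ∑ j ∈ Finset.range (k+1), (R (j+1) * P (k-j) - 2 * P (k-j+1) * R j / 2) := by
    refine Finset.sum_congr rfl fun j hj => ?_
    have hj' : j ≤ k := Nat.lt_succ_iff.mp (Finset.mem_range.mp hj)
    simp only [Nat.succ_sub_succ]
    rw [Nat.sub_add_comm hj']
    ring
  rw [expand] at tele
  rw [Finset.sum_sub_distrib] at tele
  have : ∑ j ∈ Finset.range (k+1), 2 * P (k-j+1) * R j / 2
      = ∑ j ∈ Finset.range (k+1), P (k-j+1) * R j := by
    exact Finset.sum_congr rfl fun j _ => by ring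
  rw [this] at tele
  have h2 : ∑ j ∈ Finset.range (k+1), 2 * P (k-j+1) * R j
      = 2 * ∑ j ∈ Finset.range (k+1), P (k-j+1) * R j := by
    rw [Finset.mul_sum]; exact Finset.sum_congr rfl fun j _ => by ring
  rw [h2]
  linarith [tele]

lemma key2_s12 {N : ℕ} (lam : Fin N → ℝ) (k : ℕ) (p q : Fin N → ℝ) :
    S2 (cinv lam 0) q (bnQ lam k p q)
      = -(S2 (cinv lam (k+1)) p q) + S2 (cinv lam (k+1)) p p * S2 (cinv lam 0) p q := by
  set R : ℕ → ℝ := fun m => S2 (cinv lam m) p q with hR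
  set P : ℕ → ℝ := fun m => S2 (cinv lam m) p p with hP
  set Q : ℕ → ℝ := fun m => S2 (cinv lam m) q q with hQ
  have hstart : S2 (cinv lam 0) q (bnQ lam k p q) = ∑ i, q i * bnQ lam k p q i := by
    simp [S2, cinv]
  rw [hstart]
  simp only [bnQ, mul_add, Finset.sum_add_distrib]
  have t1 : ∑ i, q i * (-((lam i)⁻¹) ^ (k+1) * p i) = -(R (k+1)) := by
    rw [hR]
    simp only [S2, cinv, ← Finset.sum_neg_distrib]
    exact Finset.sum_congr rfl fun i _ => by ring
  have t2 : ∑ i, q i * ((∑ l, ((lam l)⁻¹) ^ (k+1) * p l * p l) * p i) = P (k+1) * R 0 := by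
    rw [hR, hP]
    simp only [S2, cinv, Finset.mul_sum]
    exact Finset.sum_congr rfl fun i _ => by ring
  have t3 : ∑ i, q i * ((1/2) * ∑ j ∈ Finset.range (k+1),
      (2 * (∑ l, ((lam l)⁻¹) ^ (k - j + 1) * q l * q l) * (((lam i)⁻¹) ^ (j + 1) * p i)
       - (∑ l, ((lam l)⁻¹) ^ (j + 1) * p l * q l) * (((lam i)⁻¹) ^ (k - j + 1) * q i)
       - (∑ l, ((lam l)⁻¹) ^ (k - j + 1) * p l * q l) * (((lam i)⁻¹) ^ (j + 1) * q i))) = 0 := by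
    rw [sum_half_swap]
    have inner : ∀ j ∈ Finset.range (k+1), (∑ i, q i *
      (2 * (∑ l, ((lam l)⁻¹) ^ (k - j + 1) * q l * q l) * (((lam i)⁻¹) ^ (j + 1) * p i)
       - (∑ l, ((lam l)⁻¹) ^ (j + 1) * p l * q l) * (((lam i)⁻¹) ^ (k - j + 1) * q i)
       - (∑ l, ((lam l)⁻¹) ^ (k - j + 1) * p l * q l) * (((lam i)⁻¹) ^ (j + 1) * q i)))
        = Q (k-j+1) * R (j+1) - R (k-j+1) * Q (j+1) := by
      intro j hj
      simp only [mul_sub, Finset.sum_sub_distrib]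
      rw [hpull2 lam q _ (j+1) p, hpull2 lam q _ (k-j+1) q, hpull2 lam q _ (j+1) q]
      have e4 : S2 (cinv lam (j+1)) p q = R (j+1) := by simp [hR]
      have e5 : S2 (cinv lam (k-j+1)) q q = Q (k-j+1) := by simp [hQ]
      have e6 : S2 (cinv lam (j+1)) q q = Q (j+1) := by simp [hQ]
      have e1 : (∑ l, ((lam l)⁻¹) ^ (k-j+1) * q l * q l) = Q (k-j+1) := by simp [hQ, S2, cinv]
      have e2 : (∑ l, ((lam l)⁻¹) ^ (j+1) * p l * q l) = R (j+1) := by simp [hR, S2, cinv]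
      have e3 : (∑ l, ((lam l)⁻¹) ^ (k-j+1) * p l * q l) = R (k-j+1) := by simp [hR, S2, cinv]
      rw [e1, e2, e3, e4, e5, e6]
      ring
    rw [Finset.sum_congr rfl inner]
    have refl3 : ∑ j ∈ Finset.range (k+1), R (k-j+1) * Q (j+1)
        = ∑ j ∈ Finset.range (k+1), R (j+1) * Q (k-j+1) := by
      rw [← Finset.sum_range_reflect]
      refine Finset.sum_congr rfl fun j hj => ?_
      have hj' : j ≤ k := Nat.lt_succ_iff.mp (Finset.mem_range.mp hj)
      simp only [Nat.add_sub_cancel]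
      rw [Nat.sub_sub_self hj']
    rw [Finset.sum_sub_distrib, refl3]
    have : ∑ j ∈ Finset.range (k+1), Q (k-j+1) * R (j+1)
        = ∑ j ∈ Finset.range (k+1), R (j+1) * Q (k-j+1) :=
      Finset.sum_congr rfl fun j _ => by ring
    rw [this, sub_self, mul_zero]
  rw [t1, t2, t3, add_zero]

/-- Proposition 2 of the paper. If `(p,q)` solves the Neumann system
in `x` and the `k`-th backward Neumann system in `t` on `TS^{N-1}`, then
`u = ⟨q,q⟩ - ⟨Λp,p⟩`, `v_j = ⟨Λ^{-j}p,p⟩` give a finite parametric solution of the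
`(k+1)`-th negative-order KdV equation. -/
theorem finite_parametric_solution_nkdv
    (N : ℕ) (hN : 2 ≤ N) (lam : Fin N → ℝ)
    (hdist : Function.Injective lam) (hnz : ∀ i, lam i ≠ 0)
    (k : ℕ) (p q : ℝ → ℝ → Fin N → ℝ)
    (hp : ∀ i, ContDiff ℝ (⊤ : ℕ∞) (fun z : ℝ × ℝ => p z.1 z.2 i))
    (hq : ∀ i, ContDiff ℝ (⊤ : ℕ∞) (fun z : ℝ × ℝ => q z.1 z.2 i))
    (hode1 : ∀ x t i, deriv (fun y => p y t i) x = q x t i)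
    (hode2 : ∀ x t i, deriv (fun y => q y t i) x
      = - lam i * p x t i
        + ((∑ j, lam j * p x t j * p x t j) - (∑ j, q x t j * q x t j)) * p x t i)
    (hpt : ∀ x t i, deriv (fun s => p x s i) t = bnP lam k (p x t) (q x t) i)
    (hqt : ∀ x t i, deriv (fun s => q x s i) t = bnQ lam k (p x t) (q x t) i)
    (hsph : ∀ x t, ∑ i, p x t i * p x t i = 1)
    (htan : ∀ x t, ∑ i, p x t i * q x t i = 0)
    (u : ℝ → ℝ → ℝ) (v : ℕ → ℝ → ℝ → ℝ)
    (hu : ∀ x t, u x t = (∑ i, q x t i * q x t i) - ∑ i, lam i * p x t i * p x t i)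
    (hv : ∀ j x t, v j x t = ∑ i, ((lam i)⁻¹) ^ j * p x t i * p x t i) :
    (∀ x t, deriv (fun s => u x s) t + 2 * deriv (fun y => v (k + 1) y t) x = 0) ∧
    (∀ x t, deriv (deriv (deriv (fun y => v 1 y t))) x
        + 4 * u x t * deriv (fun y => v 1 y t) x
        + 2 * deriv (fun y => u y t) x * v 1 x t = 0) ∧
    (∀ j, 1 ≤ j → j ≤ k → ∀ x t,
      deriv (deriv (deriv (fun y => v (j + 1) y t))) x
        + 4 * u x t * deriv (fun y => v (j + 1) y t) x
        + 2 * deriv (fun y => u y t) x * v (j + 1) x t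
        + 4 * deriv (fun y => v j y t) x = 0) := by
  classical
  -- differentiability in each variable
  have hpdx : ∀ t i, Differentiable ℝ (fun y : ℝ => p y t i) := fun t i =>
    ((hp i).differentiable (by simp)).comp (differentiable_id.prodMk (differentiable_const t))
  have hqdx : ∀ t i, Differentiable ℝ (fun y : ℝ => q y t i) := fun t i =>
    ((hq i).differentiable (by simp)).comp (differentiable_id.prodMk (differentiable_const t))
  have hpdt : ∀ x i, Differentiable ℝ (fun s : ℝ => p x s i) := fun x i =>
    ((hp i).differentiable (by simp)).comp ((differentiable_const x).prodMk differentiable_id)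
  have hqdt : ∀ x i, Differentiable ℝ (fun s : ℝ => q x s i) := fun x i =>
    ((hq i).differentiable (by simp)).comp ((differentiable_const x).prodMk differentiable_id)
  -- basic HasDerivAt facts
  have hpx : ∀ x t i, HasDerivAt (fun y => p y t i) (q x t i) x := by
    intro x t i
    have h := ((hpdx t i) x).hasDerivAt
    rwa [hode1] at h
  have hqx : ∀ x t i, HasDerivAt (fun y => q y t i)
      (-lam i * p x t i
        + (S2 lam (p x t) (p x t) - S2 (cinv lam 0) (q x t) (q x t)) * p x t i) x := by
    intro x t i
    have h := ((hqdx t i) x).hasDerivAt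
    rw [hode2] at h
    have e1 : (∑ j, lam j * p x t j * p x t j) = S2 lam (p x t) (p x t) := rfl
    have e2 : (∑ j, q x t j * q x t j) = S2 (cinv lam 0) (q x t) (q x t) := by
      simp [S2, cinv]
    rw [e1, e2] at h
    exact h
  have hptd : ∀ x t i, HasDerivAt (fun s => p x s i) (bnP lam k (p x t) (q x t) i) t := by
    intro x t i
    have h := ((hpdt x i) t).hasDerivAt
    rwa [hpt] at h
  have hqtd : ∀ x t i, HasDerivAt (fun s => q x s i) (bnQ lam k (p x t) (q x t) i) t := by
    intro x t i
    have h := ((hqdt x i) t).hasDerivAt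
    rwa [hqt] at h
  -- constraints
  have hR0 : ∀ x t, S2 (cinv lam 0) (p x t) (q x t) = 0 := by
    intro x t; simpa [S2, cinv] using htan x t
  have hP0 : ∀ x t, S2 (cinv lam 0) (p x t) (p x t) = 1 := by
    intro x t; simpa [S2, cinv] using hsph x t
  -- function identifications
  have hVfun : ∀ n t, (fun y => v n y t) = fun y => S2 (cinv lam n) (p y t) (p y t) := by
    intro n t; funext y; rw [hv]; simp [S2, cinv]
  have hvs : ∀ n x t, v n x t = S2 (cinv lam n) (p x t) (p x t) := by
    intro n x t; rw [hv]; simp [S2, cinv]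
  have hus : ∀ x t, u x t = S2 (cinv lam 0) (q x t) (q x t) - S2 lam (p x t) (p x t) := by
    intro x t; rw [hu]; simp [S2, cinv]
  -- x-derivatives
  have dV : ∀ n t x, HasDerivAt (fun y => S2 (cinv lam n) (p y t) (p y t))
      (2 * S2 (cinv lam n) (p x t) (q x t)) x := by
    intro n t x
    refine (hasDerivAt_S2 (cinv lam n) (fun i => hpx x t i) (fun i => hpx x t i)).congr_d ?_
    rw [S2, Finset.mul_sum]
    exact Finset.sum_congr rfl fun i _ => by ring
  have dS : ∀ t x, HasDerivAt (fun y => S2 lam (p y t) (p y t))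
      (2 * S2 lam (p x t) (q x t)) x := by
    intro t x
    refine (hasDerivAt_S2 lam (fun i => hpx x t i) (fun i => hpx x t i)).congr_d ?_
    rw [S2, Finset.mul_sum]
    exact Finset.sum_congr rfl fun i _ => by ring
  have dQ0 : ∀ t x, HasDerivAt (fun y => S2 (cinv lam 0) (q y t) (q y t))
      (-2 * S2 lam (p x t) (q x t)
        + 2 * (S2 lam (p x t) (p x t) - S2 (cinv lam 0) (q x t) (q x t))
            * S2 (cinv lam 0) (p x t) (q x t)) x := by
    intro t x
    refine (hasDerivAt_S2 (cinv lam 0) (fun i => hqx x t i) (fun i => hqx x t i)).congr_d ?_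
    simp only [S2, cinv, Finset.mul_sum, neg_mul, ← Finset.sum_neg_distrib,
      ← Finset.sum_add_distrib]
    exact Finset.sum_congr rfl fun i _ => by ring
  have dR : ∀ m t x, HasDerivAt (fun y => S2 (cinv lam (m+1)) (p y t) (q y t))
      (S2 (cinv lam (m+1)) (q x t) (q x t) - S2 (cinv lam m) (p x t) (p x t)
        + (S2 lam (p x t) (p x t) - S2 (cinv lam 0) (q x t) (q x t))
            * S2 (cinv lam (m+1)) (p x t) (p x t)) x := by
    intro m t x
    refine (hasDerivAt_S2 (cinv lam (m+1)) (fun i => hpx x t i) (fun i => hqx x t i)).congr_d ?_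
    simp only [S2, cinv, Finset.mul_sum, ← Finset.sum_sub_distrib, ← Finset.sum_add_distrib]
    refine Finset.sum_congr rfl fun i _ => ?_
    linear_combination (-(p x t i * p x t i)) * cinv_cancel hnz i m
  have dQ : ∀ m t x, HasDerivAt (fun y => S2 (cinv lam (m+1)) (q y t) (q y t))
      (-2 * S2 (cinv lam m) (p x t) (q x t)
        + 2 * (S2 lam (p x t) (p x t) - S2 (cinv lam 0) (q x t) (q x t))
            * S2 (cinv lam (m+1)) (p x t) (q x t)) x := by
    intro m t x
    refine (hasDerivAt_S2 (cinv lam (m+1)) (fun i => hqx x t i) (fun i => hqx x t i)).congr_d ?_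
    simp only [S2, cinv, Finset.mul_sum, neg_mul, ← Finset.sum_neg_distrib,
      ← Finset.sum_add_distrib]
    refine Finset.sum_congr rfl fun i _ => ?_
    linear_combination (-2 * (p x t i * q x t i)) * cinv_cancel hnz i m
  have d1p : ∀ n t x, deriv (fun y => v n y t) x = 2 * S2 (cinv lam n) (p x t) (q x t) := by
    intro n t x; rw [hVfun n t]; exact (dV n t x).deriv
  have d1fun : ∀ n t, deriv (fun y => v n y t)
      = fun x => 2 * S2 (cinv lam n) (p x t) (q x t) := by
    intro n t; funext x; exact d1p n t x
  have d2fun : ∀ m t, deriv (deriv (fun y => v (m+1) y t))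
      = fun x => 2 * (S2 (cinv lam (m+1)) (q x t) (q x t) - S2 (cinv lam m) (p x t) (p x t)
        + (S2 lam (p x t) (p x t) - S2 (cinv lam 0) (q x t) (q x t))
            * S2 (cinv lam (m+1)) (p x t) (p x t)) := by
    intro m t
    rw [d1fun]
    funext x
    exact ((dR m t x).const_mul 2).deriv
  have d3 : ∀ m t x, deriv (deriv (deriv (fun y => v (m+1) y t))) x
      = 2 * (((-2 * S2 (cinv lam m) (p x t) (q x t)
        + 2 * (S2 lam (p x t) (p x t) - S2 (cinv lam 0) (q x t) (q x t))
            * S2 (cinv lam (m+1)) (p x t) (q x t))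
        - 2 * S2 (cinv lam m) (p x t) (q x t))
        + ((2 * S2 lam (p x t) (q x t)
            - (-2 * S2 lam (p x t) (q x t)
              + 2 * (S2 lam (p x t) (p x t) - S2 (cinv lam 0) (q x t) (q x t))
                  * S2 (cinv lam 0) (p x t) (q x t)))
              * S2 (cinv lam (m+1)) (p x t) (p x t)
          + (S2 lam (p x t) (p x t) - S2 (cinv lam 0) (q x t) (q x t))
              * (2 * S2 (cinv lam (m+1)) (p x t) (q x t)))) := by
    intro m t x
    rw [d2fun m t]
    exact ((((dQ m t x).sub (dV m t x)).add
      (((dS t x).sub (dQ0 t x)).mul (dV (m+1) t x))).const_mul 2).deriv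
  have dux : ∀ t x, deriv (fun y => u y t) x
      = (-2 * S2 lam (p x t) (q x t)
        + 2 * (S2 lam (p x t) (p x t) - S2 (cinv lam 0) (q x t) (q x t))
            * S2 (cinv lam 0) (p x t) (q x t))
        - 2 * S2 lam (p x t) (q x t) := by
    intro t x
    have hufun : (fun y => u y t)
        = fun y => S2 (cinv lam 0) (q y t) (q y t) - S2 lam (p y t) (p y t) := by
      funext y; exact hus y t
    rw [hufun]
    exact ((dQ0 t x).sub (dS t x)).deriv
  -- t-derivative of u
  have dut : ∀ x t, deriv (fun s => u x s) t
      = 2 * S2 (cinv lam 0) (q x t) (bnQ lam k (p x t) (q x t))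
        - 2 * S2 lam (p x t) (bnP lam k (p x t) (q x t)) := by
    intro x t
    have hufun : (fun s => u x s)
        = fun s => S2 (cinv lam 0) (q x s) (q x s) - S2 lam (p x s) (p x s) := by
      funext s; exact hus x s
    rw [hufun]
    have h1 : HasDerivAt (fun s => S2 (cinv lam 0) (q x s) (q x s))
        (2 * S2 (cinv lam 0) (q x t) (bnQ lam k (p x t) (q x t))) t := by
      refine (hasDerivAt_S2 (cinv lam 0) (fun i => hqtd x t i) (fun i => hqtd x t i)).congr_d ?_
      rw [S2, Finset.mul_sum]
      exact Finset.sum_congr rfl fun i _ => by ring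
    have h2 : HasDerivAt (fun s => S2 lam (p x s) (p x s))
        (2 * S2 lam (p x t) (bnP lam k (p x t) (q x t))) t := by
      refine (hasDerivAt_S2 lam (fun i => hptd x t i) (fun i => hptd x t i)).congr_d ?_
      rw [S2, Finset.mul_sum]
      exact Finset.sum_congr rfl fun i _ => by ring
    exact (h1.sub h2).deriv
  refine ⟨?_, ?_, ?_⟩
  · intro x t
    rw [dut x t, key2_s12 lam k (p x t) (q x t), key1_s12 lam hnz k (p x t) (q x t),
      d1p (k+1) t x, hR0, hP0]
    ring
  · intro x t
    have h3 := d3 0 t x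
    norm_num at h3
    rw [h3, d1p 1 t x, dux t x, hus x t, hvs 1 x t, hR0]
    ring
  · intro j _ _ x t
    rw [d3 j t x, d1p (j+1) t x, d1p j t x, dux t x, hus x t, hvs (j+1) x t, hR0]
    ring
end

section
/- (Corollary 2.) Let p, q : ℝ × ℝ → ℝ^N be smooth functions of (x,t) such that for each fixed t, (p,q) satisfies in x the Neumann system p_x = q, q_x = −Λp + (⟨Λp,p⟩ − ⟨q,q⟩)p, for each fixed x it satisfies in t the 0-th backward Neumann system p_t = ⟨Λ^{−1}p,q⟩Λ^{−1}p − ⟨Λ^{−1}p,p⟩Λ^{−1}q, q_t = ⟨Λ^{−1}q,q⟩Λ^{−1}p − Λ^{−1}p + ⟨Λ^{−1}p,p⟩p − ⟨Λ^{−1}p,q⟩Λ^{−1}q, and ⟨p,p⟩ = 1, ⟨p,q⟩ = 0 everywhere. Then u = ⟨q,q⟩ − ⟨Λp,p⟩ and v = ⟨Λ^{−1}p,p⟩ satisfy the negative-order KdV equation: ∂_t u + 2 ∂_x v = 0 and ∂_x³ v + 4u ∂_x v + 2(∂_x u) v = 0. -/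
open Finset

/-- Derivative of a sum of the form `∑ i, c i * f y i * g y i`. -/
lemma deriv_sum_cmul {N : ℕ} (c : Fin N → ℝ) (f g : ℝ → Fin N → ℝ) (x : ℝ)
    (hf : ∀ i, DifferentiableAt ℝ (fun y => f y i) x)
    (hg : ∀ i, DifferentiableAt ℝ (fun y => g y i) x) :
    deriv (fun y => ∑ i, c i * f y i * g y i) x
      = ∑ i, (c i * (deriv (fun y => f y i) x) * g x i
             + c i * f x i * (deriv (fun y => g y i) x)) := by
  rw [deriv_fun_sum (fun i _ => (((hf i).const_mul (c i)).fun_mul (hg i)))]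
  refine Finset.sum_congr rfl fun i _ => ?_
  rw [deriv_fun_mul ((hf i).const_mul (c i)) (hg i), deriv_const_mul _ (hf i)]

/-- Corollary 2 of the paper. If `(p,q)` solves the Neumann system
in `x` and the 0-th backward Neumann system in `t` on `TS^{N-1}`, then
`u = ⟨q,q⟩ - ⟨Λp,p⟩` and `v = ⟨Λ⁻¹p,p⟩` solve the negative-order KdV equation
`u_t + 2 v_x = 0`, `v_{xxx} + 4 u v_x + 2 u_x v = 0`. -/
theorem nkdv_solution_from_neumann
    (N : ℕ) (hN : 2 ≤ N) (lam : Fin N → ℝ)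
    (hdist : Function.Injective lam) (hnz : ∀ i, lam i ≠ 0)
    (p q : ℝ → ℝ → Fin N → ℝ)
    (hp : ∀ i, ContDiff ℝ (⊤ : ℕ∞) (fun z : ℝ × ℝ => p z.1 z.2 i))
    (hq : ∀ i, ContDiff ℝ (⊤ : ℕ∞) (fun z : ℝ × ℝ => q z.1 z.2 i))
    (hode1 : ∀ x t i, deriv (fun y => p y t i) x = q x t i)
    (hode2 : ∀ x t i, deriv (fun y => q y t i) x
      = - lam i * p x t i
        + ((∑ j, lam j * p x t j * p x t j) - (∑ j, q x t j * q x t j)) * p x t i)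
    (hpt : ∀ x t i, deriv (fun s => p x s i) t
      = (∑ l, (lam l)⁻¹ * p x t l * q x t l) * ((lam i)⁻¹ * p x t i)
        - (∑ l, (lam l)⁻¹ * p x t l * p x t l) * ((lam i)⁻¹ * q x t i))
    (hqt : ∀ x t i, deriv (fun s => q x s i) t
      = (∑ l, (lam l)⁻¹ * q x t l * q x t l) * ((lam i)⁻¹ * p x t i)
        - (lam i)⁻¹ * p x t i
        + (∑ l, (lam l)⁻¹ * p x t l * p x t l) * p x t i
        - (∑ l, (lam l)⁻¹ * p x t l * q x t l) * ((lam i)⁻¹ * q x t i))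
    (hsph : ∀ x t, ∑ i, p x t i * p x t i = 1)
    (htan : ∀ x t, ∑ i, p x t i * q x t i = 0)
    (u v : ℝ → ℝ → ℝ)
    (hu : ∀ x t, u x t = (∑ i, q x t i * q x t i) - ∑ i, lam i * p x t i * p x t i)
    (hv : ∀ x t, v x t = ∑ i, (lam i)⁻¹ * p x t i * p x t i) :
    (∀ x t, deriv (fun s => u x s) t + 2 * deriv (fun y => v y t) x = 0) ∧
    (∀ x t, deriv (deriv (deriv (fun y => v y t))) x
        + 4 * u x t * deriv (fun y => v y t) x
        + 2 * deriv (fun y => u y t) x * v x t = 0) := by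
  -- differentiability in each variable separately
  have hPx : ∀ t i, Differentiable ℝ (fun y => p y t i) := fun t i =>
    ((hp i).differentiable (by simp)).comp (differentiable_id.prodMk (differentiable_const t))
  have hQx : ∀ t i, Differentiable ℝ (fun y => q y t i) := fun t i =>
    ((hq i).differentiable (by simp)).comp (differentiable_id.prodMk (differentiable_const t))
  have hPt : ∀ x i, Differentiable ℝ (fun s => p x s i) := fun x i =>
    ((hp i).differentiable (by simp)).comp ((differentiable_const x).prodMk differentiable_id)
  have hQt : ∀ x i, Differentiable ℝ (fun s => q x s i) := fun x i =>
    ((hq i).differentiable (by simp)).comp ((differentiable_const x).prodMk differentiable_id)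
  -- the functions u and v as explicit sums
  have hufun : ∀ t, (fun y => u y t)
      = fun y => (∑ i, q y t i * q y t i) - ∑ i, lam i * p y t i * p y t i :=
    fun t => funext fun y => hu y t
  have hvfun : ∀ t, (fun y => v y t) = fun y => ∑ i, (lam i)⁻¹ * p y t i * p y t i :=
    fun t => funext fun y => hv y t
  -- differentiability (in x) of the relevant scalar quantities
  have hWd : ∀ t, Differentiable ℝ (fun y => ∑ i, (lam i)⁻¹ * p y t i * q y t i) :=
    fun t => Differentiable.fun_sum fun i _ => ((hPx t i).const_mul _).mul (hQx t i)
  have hRd : ∀ t, Differentiable ℝ (fun y => ∑ i, (lam i)⁻¹ * q y t i * q y t i) :=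
    fun t => Differentiable.fun_sum fun i _ => ((hQx t i).const_mul _).mul (hQx t i)
  have hUd : ∀ t, Differentiable ℝ (fun y => u y t) := by
    intro t; rw [hufun t]
    exact (Differentiable.fun_sum fun i _ => (hQx t i).mul (hQx t i)).sub
      (Differentiable.fun_sum fun i _ => ((hPx t i).const_mul _).mul (hPx t i))
  have hVd : ∀ t, Differentiable ℝ (fun y => v y t) := by
    intro t; rw [hvfun t]
    exact Differentiable.fun_sum fun i _ => ((hPx t i).const_mul _).mul (hPx t i)
  -- L1 : v_x = 2 W
  have L1 : ∀ x t, deriv (fun y => v y t) x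
      = 2 * ∑ i, (lam i)⁻¹ * p x t i * q x t i := by
    intro x t
    rw [hvfun t, deriv_sum_cmul _ _ _ x (fun i => (hPx t i).differentiableAt)
      (fun i => (hPx t i).differentiableAt)]
    simp only [hode1]
    rw [Finset.mul_sum]
    exact Finset.sum_congr rfl fun i _ => by ring
  -- L2 : W_x = R - 1 - u v
  have L2 : ∀ x t, deriv (fun y => ∑ i, (lam i)⁻¹ * p y t i * q y t i) x
      = (∑ i, (lam i)⁻¹ * q x t i * q x t i) - 1 - u x t * v x t := by
    intro x t
    rw [deriv_sum_cmul _ _ _ x (fun i => (hPx t i).differentiableAt)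
      (fun i => (hQx t i).differentiableAt)]
    simp only [hode1, hode2]
    have key : ∀ i : Fin N, (lam i)⁻¹ * q x t i * q x t i
        + (lam i)⁻¹ * p x t i *
          (- lam i * p x t i
            + ((∑ j, lam j * p x t j * p x t j) - ∑ j, q x t j * q x t j) * p x t i)
        = (lam i)⁻¹ * q x t i * q x t i + (-1) * (p x t i * p x t i)
          + ((∑ j, lam j * p x t j * p x t j) - ∑ j, q x t j * q x t j)
              * ((lam i)⁻¹ * p x t i * p x t i) := by
      intro i
      field_simp [hnz i]
      ring
    rw [Finset.sum_congr rfl fun i _ => key i]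
    rw [Finset.sum_add_distrib, Finset.sum_add_distrib, ← Finset.mul_sum, ← Finset.mul_sum,
      hsph, hu, hv]
    ring
  -- L3 : R_x = -2 u W
  have L3 : ∀ x t, deriv (fun y => ∑ i, (lam i)⁻¹ * q y t i * q y t i) x
      = -2 * u x t * ∑ i, (lam i)⁻¹ * p x t i * q x t i := by
    intro x t
    rw [deriv_sum_cmul _ _ _ x (fun i => (hQx t i).differentiableAt)
      (fun i => (hQx t i).differentiableAt)]
    simp only [hode2]
    have key : ∀ i : Fin N, (lam i)⁻¹ *
          (- lam i * p x t i
            + ((∑ j, lam j * p x t j * p x t j) - ∑ j, q x t j * q x t j) * p x t i)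
          * q x t i
        + (lam i)⁻¹ * q x t i *
          (- lam i * p x t i
            + ((∑ j, lam j * p x t j * p x t j) - ∑ j, q x t j * q x t j) * p x t i)
        = (-2) * (p x t i * q x t i)
          + (2 * ((∑ j, lam j * p x t j * p x t j) - ∑ j, q x t j * q x t j))
              * ((lam i)⁻¹ * p x t i * q x t i) := by
      intro i
      field_simp [hnz i]
      ring
    rw [Finset.sum_congr rfl fun i _ => key i]
    rw [Finset.sum_add_distrib, ← Finset.mul_sum, ← Finset.mul_sum, htan, hu]
    ring
  -- Lut : u_t = -4 W
  have Lut : ∀ x t, deriv (fun s => u x s) t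
      = -4 * ∑ i, (lam i)⁻¹ * p x t i * q x t i := by
    intro x t
    have e : (fun s => u x s)
        = fun s => (∑ i, (1:ℝ) * q x s i * q x s i) - ∑ i, lam i * p x s i * p x s i := by
      funext s; rw [hu x s]; simp
    rw [e, deriv_fun_sub
      (DifferentiableAt.fun_sum fun i _ => (((hQt x i) t).const_mul _).fun_mul ((hQt x i) t))
      (DifferentiableAt.fun_sum fun i _ => (((hPt x i) t).const_mul _).fun_mul ((hPt x i) t))]
    rw [deriv_sum_cmul _ _ _ t (fun i => (hQt x i) t) (fun i => (hQt x i) t),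
      deriv_sum_cmul _ _ _ t (fun i => (hPt x i) t) (fun i => (hPt x i) t)]
    simp only [hpt, hqt]
    have key1 : ∀ i : Fin N, (1:ℝ) *
          ((∑ l, (lam l)⁻¹ * q x t l * q x t l) * ((lam i)⁻¹ * p x t i)
            - (lam i)⁻¹ * p x t i
            + (∑ l, (lam l)⁻¹ * p x t l * p x t l) * p x t i
            - (∑ l, (lam l)⁻¹ * p x t l * q x t l) * ((lam i)⁻¹ * q x t i)) * q x t i
        + (1:ℝ) * q x t i *
          ((∑ l, (lam l)⁻¹ * q x t l * q x t l) * ((lam i)⁻¹ * p x t i)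
            - (lam i)⁻¹ * p x t i
            + (∑ l, (lam l)⁻¹ * p x t l * p x t l) * p x t i
            - (∑ l, (lam l)⁻¹ * p x t l * q x t l) * ((lam i)⁻¹ * q x t i))
        = (2 * (∑ l, (lam l)⁻¹ * q x t l * q x t l) - 2) * ((lam i)⁻¹ * p x t i * q x t i)
          + (2 * (∑ l, (lam l)⁻¹ * p x t l * p x t l)) * (p x t i * q x t i)
          + (-2 * (∑ l, (lam l)⁻¹ * p x t l * q x t l)) * ((lam i)⁻¹ * q x t i * q x t i) := by
      intro i; ring
    have key2 : ∀ i : Fin N, lam i *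
          ((∑ l, (lam l)⁻¹ * p x t l * q x t l) * ((lam i)⁻¹ * p x t i)
            - (∑ l, (lam l)⁻¹ * p x t l * p x t l) * ((lam i)⁻¹ * q x t i)) * p x t i
        + lam i * p x t i *
          ((∑ l, (lam l)⁻¹ * p x t l * q x t l) * ((lam i)⁻¹ * p x t i)
            - (∑ l, (lam l)⁻¹ * p x t l * p x t l) * ((lam i)⁻¹ * q x t i))
        = (2 * (∑ l, (lam l)⁻¹ * p x t l * q x t l)) * (p x t i * p x t i)
          + (-2 * (∑ l, (lam l)⁻¹ * p x t l * p x t l)) * (p x t i * q x t i) := by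
      intro i
      field_simp [hnz i]
      ring
    rw [Finset.sum_congr rfl fun i _ => key1 i, Finset.sum_congr rfl fun i _ => key2 i]
    rw [Finset.sum_add_distrib, Finset.sum_add_distrib, Finset.sum_add_distrib,
      ← Finset.mul_sum, ← Finset.mul_sum, ← Finset.mul_sum, ← Finset.mul_sum, ← Finset.mul_sum,
      hsph, htan]
    ring
  constructor
  · intro x t
    rw [Lut x t, L1 x t]
    ring
  · intro x t
    -- rewrite the first derivative as a function of x
    have e1 : deriv (fun y => v y t) = fun y => 2 * ∑ i, (lam i)⁻¹ * p y t i * q y t i :=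
      funext fun y => L1 y t
    -- second derivative
    have e2 : deriv (fun y => 2 * ∑ i, (lam i)⁻¹ * p y t i * q y t i)
        = fun y => 2 * (∑ i, (lam i)⁻¹ * q y t i * q y t i) - 2 - 2 * (u y t * v y t) := by
      funext y
      rw [deriv_const_mul _ ((hWd t) y), L2 y t]
      ring
    rw [e1, e2]
    -- third derivative
    have hd3 : deriv (fun y => 2 * (∑ i, (lam i)⁻¹ * q y t i * q y t i)
          - 2 - 2 * (u y t * v y t)) x
        = 2 * deriv (fun y => ∑ i, (lam i)⁻¹ * q y t i * q y t i) x - 0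
          - 2 * (deriv (fun y => u y t) x * v x t + u x t * deriv (fun y => v y t) x) := by
      rw [deriv_fun_sub, deriv_fun_sub, deriv_const_mul _ ((hRd t) x), deriv_const]
      · rw [deriv_const_mul _ (((hUd t) x).fun_mul ((hVd t) x)),
          deriv_fun_mul ((hUd t) x) ((hVd t) x)]
      · exact ((hRd t) x).const_mul _
      · exact differentiableAt_const _
      · exact (((hRd t) x).const_mul _).sub (differentiableAt_const _)
      · exact (((hUd t) x).mul ((hVd t) x)).const_mul _
    rw [hd3, L3 x t, L1 x t]
    ring
end
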